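/- arXiv:1602.05846 — 6 statements merged into one kernel-verified Lean document; each statement's English description precedes it below -/
import Mathlib

section
/- Let $0<\lambda<n$, $0<\alpha<1$, and let $K:\mathbb{R}^n\setminus\{0\}\to\mathbb{R}$ satisfy $|K(x)|\le C|x|^{\lambda-n}$ for $x\neq 0$ and $|K(x-y)-K(x)|\le C|y|/|x|^{n+1-\lambda}$ for $|y|\le |x|/2$. Then there is a constant $C'$ such that for every $x\neq 0$, $\int_{\mathbb{R}^n}\frac{|K(x)-K(y)|}{|x-y|^{n+\alpha}}\,dy \le C'|x|^{\lambda-n-\alpha}$. -/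
/-
By homogeneity, `z ↦ R ^ (d - λ) * K (R • z)` satisfies the hypotheses with the same constant,
and the substitution `y = R • w` with `R = ‖x‖` turns the integral at `x` into `R ^ (λ - d - α)`
times the integral of the rescaled kernel at the unit vector `R⁻¹ • x`. So it suffices to bound
the integral uniformly over unit vectors `x`. There the smoothness estimate bounds the integrand
by `C ‖x - y‖ ^ (1 - d - α)` when `‖x - y‖ < 1/2`; otherwise `|K x - K y| ≤ |K x| + |K y|` gives
`C ‖x - y‖ ^ (-d - α)` plus a multiple of `‖y‖ ^ (λ - d)` for `‖y‖ < 2` and of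
`‖y‖ ^ (λ - 2d - α)` for `‖y‖ ≥ 2`. Each of these radial profiles is integrable on `ℝ^d`: its
exponent near the origin exceeds `-d` and its exponent at infinity is below `-d`.
-/

open MeasureTheory Metric Set Module
open scoped ENNReal

noncomputable def radialPower {E : Type*} [Norm E] (r p q : ℝ) (z : E) : ℝ :=
  if ‖z‖ < r then ‖z‖ ^ p else ‖z‖ ^ q

lemma radialPower_nonneg {E : Type*} [SeminormedAddGroup E] (r p q : ℝ) (z : E) :
    0 ≤ radialPower r p q z := by
  unfold radialPower; split_ifs <;> positivity

lemma radialPower_of_lt {E : Type*} [Norm E] {r p q : ℝ} {z : E} (h : ‖z‖ < r) :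
    radialPower r p q z = ‖z‖ ^ p := if_pos h

lemma radialPower_of_le {E : Type*} [Norm E] {r p q : ℝ} {z : E} (h : r ≤ ‖z‖) :
    radialPower r p q z = ‖z‖ ^ q := if_neg h.not_gt

lemma measurable_radialPower {E : Type*} [NormedAddCommGroup E] [MeasurableSpace E]
    [OpensMeasurableSpace E] {r p q : ℝ} : Measurable (radialPower r p q : E → ℝ) :=
  Measurable.ite (measurableSet_lt measurable_norm measurable_const)
    (measurable_norm.pow_const p) (measurable_norm.pow_const q)

section Haar

variable {E : Type*} [NormedAddCommGroup E] [NormedSpace ℝ E] [FiniteDimensional ℝ E]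
  [MeasurableSpace E] [BorelSpace E] (μ : Measure E) [μ.IsAddHaarMeasure]

lemma integrableOn_compl_ball_rpow_norm {r q : ℝ} (hr : 0 < r) (hq : q < -(finrank ℝ E : ℝ)) :
    IntegrableOn (fun z : E ↦ ‖z‖ ^ q) (ball 0 r)ᶜ μ := by
  have hq0 : q < 0 := hq.trans_le (by simp)
  refine (((integrable_one_add_norm (r := -q) (by linarith)).const_mul
    ((1 + r⁻¹) ^ (-q))).integrableOn).mono' (measurable_norm.pow_const q).aestronglyMeasurable ?_
  refine (ae_restrict_mem measurableSet_ball.compl).mono fun z hz ↦ ?_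
  have hrz : r ≤ ‖z‖ := by simpa using hz
  have hz0 : 0 < ‖z‖ := hr.trans_le hrz
  have hle : 1 + ‖z‖ ≤ (1 + r⁻¹) * ‖z‖ := by
    have : 1 ≤ r⁻¹ * ‖z‖ := by rw [inv_mul_eq_div, le_div_iff₀ hr]; linarith
    linarith
  rw [Real.norm_of_nonneg (by positivity), neg_neg]
  calc ‖z‖ ^ q = (1 + r⁻¹) ^ (-q) * ((1 + r⁻¹) * ‖z‖) ^ q := by
        rw [Real.mul_rpow (by positivity) hz0.le, ← mul_assoc, ← Real.rpow_add (by positivity)]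
        simp
    _ ≤ (1 + r⁻¹) ^ (-q) * (1 + ‖z‖) ^ q := by
        gcongr ?_ * ?_
        exact Real.rpow_le_rpow_of_nonpos (by positivity) hle hq0.le

lemma integrable_radialPower [Nontrivial E] {r p q : ℝ} (hr : 0 < r)
    (hp : -(finrank ℝ E : ℝ) < p) (hq : q < -(finrank ℝ E : ℝ)) :
    Integrable (radialPower r p q) μ := by
  rw [← integrableOn_univ, ← union_compl_self (ball 0 r)]
  refine IntegrableOn.union ?_ ?_
  · have : IntegrableOn (fun z : E ↦ ‖z‖ ^ p) (ball 0 r) μ :=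
      integrableOn_ball_of_norm_le_rpow (C := 1) (α := -p) Module.finrank_pos
        (by linarith)
        (.of_forall fun z ↦ by simp [abs_of_nonneg (Real.rpow_nonneg (norm_nonneg z) p)])
        (measurable_norm.pow_const p).aestronglyMeasurable
    exact this.congr_fun (fun z hz ↦ by simp_all [radialPower]) measurableSet_ball
  · exact (integrableOn_compl_ball_rpow_norm μ hr hq).congr_fun
      (fun z hz ↦ by simp_all [radialPower]) measurableSet_ball.compl

lemma lintegral_eq_ofReal_mul_lintegral_comp_smul (f : E → ℝ≥0∞) {R : ℝ} (hR : 0 < R) :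
    ∫⁻ y, f y ∂μ = ENNReal.ofReal (R ^ finrank ℝ E) * ∫⁻ w, f (R • w) ∂μ := by
  have hmap : ∫⁻ w, f (R • w) ∂μ = ∫⁻ y, f y ∂(Measure.map (R • ·) μ) :=
    (lintegral_map_equiv f (MeasurableEquiv.smul₀ R hR.ne')).symm
  rw [hmap, Measure.map_addHaar_smul μ hR.ne', lintegral_smul_measure, smul_eq_mul, ← mul_assoc,
    ← ENNReal.ofReal_mul (by positivity), abs_of_pos (by positivity),
    mul_inv_cancel₀ (by positivity), ENNReal.ofReal_one, one_mul]

end Haar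

section Kernel

variable {E : Type*} [NormedAddCommGroup E]

structure IsRieszTypeKernel (d lam C : ℝ) (K : E → ℝ) : Prop where
  abs_le : ∀ x, x ≠ 0 → |K x| ≤ C * ‖x‖ ^ (lam - d)
  abs_sub_le : ∀ x y, x ≠ 0 → ‖y‖ ≤ ‖x‖ / 2 → |K (x - y) - K x| ≤ C * ‖y‖ / ‖x‖ ^ (d + 1 - lam)

variable {d lam C α : ℝ} {K : E → ℝ} {x y : E}

lemma IsRieszTypeKernel.const_nonneg (hK : IsRieszTypeKernel d lam C K) (hx : x ≠ 0) : 0 ≤ C :=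
  (mul_nonneg_iff_of_pos_right (Real.rpow_pos_of_pos (norm_pos_iff.mpr hx) _)).mp
    ((abs_nonneg _).trans (hK.abs_le x hx))

lemma IsRieszTypeKernel.abs_sub_le_of_norm_eq_one (hK : IsRieszTypeKernel d lam C K)
    (hx : ‖x‖ = 1) (hxy : ‖x - y‖ ≤ 1 / 2) : |K x - K y| ≤ C * ‖x - y‖ := by
  have h := hK.abs_sub_le x (x - y) (norm_ne_zero_iff.mp (by simp [hx])) (by rw [hx]; exact hxy)
  rwa [sub_sub_cancel, hx, Real.one_rpow, div_one, abs_sub_comm] at h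

lemma IsRieszTypeKernel.abs_div_le_radialPower (hK : IsRieszTypeKernel d lam C K)
    (hdα : 0 ≤ d + α) (hx : ‖x‖ = 1) (hy : y ≠ 0) (hxy : 1 / 2 ≤ ‖x - y‖) :
    |K y| / ‖x - y‖ ^ (d + α) ≤ C * 2 ^ (d + α) * radialPower 2 (lam - d) (lam - 2 * d - α) y := by
  have hC := hK.const_nonneg hy
  have hy0 : 0 < ‖y‖ := norm_pos_iff.mpr hy
  rcases lt_or_ge ‖y‖ 2 with hy2 | hy2
  · rw [radialPower_of_lt hy2]
    calc |K y| / ‖x - y‖ ^ (d + α) ≤ C * ‖y‖ ^ (lam - d) / (1 / 2) ^ (d + α) := by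
          gcongr
          exact hK.abs_le y hy
      _ = C * 2 ^ (d + α) * ‖y‖ ^ (lam - d) := by
          rw [Real.div_rpow zero_le_one zero_le_two, Real.one_rpow]
          field_simp
  · rw [radialPower_of_le hy2]
    -- far from the origin, `x` is negligible: `‖x - y‖ ≥ ‖y‖ - 1 ≥ ‖y‖ / 2`
    have hxy' : ‖y‖ / 2 ≤ ‖x - y‖ := by
      have := norm_sub_norm_le y x
      rw [norm_sub_rev y x, hx] at this
      linarith
    calc |K y| / ‖x - y‖ ^ (d + α) ≤ C * ‖y‖ ^ (lam - d) / (‖y‖ / 2) ^ (d + α) := by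
          gcongr
          exact hK.abs_le y hy
      _ = C * 2 ^ (d + α) * ‖y‖ ^ (lam - 2 * d - α) := by
          rw [Real.div_rpow hy0.le zero_le_two,
            show lam - 2 * d - α = (lam - d) - (d + α) by ring, Real.rpow_sub hy0 (lam - d)]
          field_simp

lemma IsRieszTypeKernel.gagliardo_integrand_le (hK : IsRieszTypeKernel d lam C K)
    (hdα : 0 ≤ d + α) (hx : ‖x‖ = 1) (hy : y ≠ 0) :
    |K x - K y| / ‖x - y‖ ^ (d + α) ≤
      C * radialPower (1 / 2) (1 - d - α) (-(d + α)) (x - y) +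
        C * 2 ^ (d + α) * radialPower 2 (lam - d) (lam - 2 * d - α) y := by
  have hC := hK.const_nonneg hy
  have hfar := radialPower_nonneg 2 (lam - d) (lam - 2 * d - α) y
  rcases eq_or_ne x y with rfl | hne
  · simp only [sub_self, abs_zero, zero_div]
    have := radialPower_nonneg (1 / 2) (1 - d - α) (-(d + α)) (0 : E)
    positivity
  have hxy0 : 0 < ‖x - y‖ := norm_pos_iff.mpr (sub_ne_zero.mpr hne)
  rcases lt_or_ge ‖x - y‖ (1 / 2) with hxy | hxy
  · rw [radialPower_of_lt hxy]
    calc |K x - K y| / ‖x - y‖ ^ (d + α) ≤ C * ‖x - y‖ / ‖x - y‖ ^ (d + α) := by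
          gcongr
          exact hK.abs_sub_le_of_norm_eq_one hx hxy.le
      _ = C * ‖x - y‖ ^ (1 - d - α) := by
          rw [show 1 - d - α = 1 - (d + α) by ring, Real.rpow_sub hxy0, Real.rpow_one,
            mul_div_assoc]
      _ ≤ _ := le_add_of_nonneg_right (by positivity)
  · rw [radialPower_of_le hxy]
    calc |K x - K y| / ‖x - y‖ ^ (d + α)
        ≤ |K x| / ‖x - y‖ ^ (d + α) + |K y| / ‖x - y‖ ^ (d + α) := by
          rw [← add_div]
          gcongr
          exact abs_sub _ _
      _ ≤ _ := by
          gcongr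
          · rw [Real.rpow_neg hxy0.le, ← div_eq_mul_inv]
            gcongr
            simpa [hx] using hK.abs_le x (norm_ne_zero_iff.mp (by simp [hx]))
          · exact hK.abs_div_le_radialPower hdα hx hy hxy

end Kernel

section Rescale

variable {E : Type*} [NormedAddCommGroup E] [NormedSpace ℝ E]

noncomputable def rescaleKernel (d lam R : ℝ) (K : E → ℝ) (z : E) : ℝ :=
  R ^ (d - lam) * K (R • z)

variable {d lam C R : ℝ} {K : E → ℝ}

lemma IsRieszTypeKernel.rescale (hK : IsRieszTypeKernel d lam C K) (hR : 0 < R) :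
    IsRieszTypeKernel d lam C (rescaleKernel d lam R K) where
  abs_le z hz := by
    have hRz : ‖R • z‖ = R * ‖z‖ := by rw [norm_smul, Real.norm_of_nonneg hR.le]
    calc |rescaleKernel d lam R K z| = R ^ (d - lam) * |K (R • z)| := by
          rw [rescaleKernel, abs_mul, abs_of_pos (by positivity)]
      _ ≤ R ^ (d - lam) * (C * (R * ‖z‖) ^ (lam - d)) := by
          gcongr
          rw [← hRz]
          exact hK.abs_le _ (smul_ne_zero hR.ne' hz)
      _ = C * ‖z‖ ^ (lam - d) := by
          have hR1 : R ^ (d - lam) * R ^ (lam - d) = 1 := by rw [← Real.rpow_add hR]; simp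
          rw [Real.mul_rpow hR.le (norm_nonneg z)]
          linear_combination (C * ‖z‖ ^ (lam - d)) * hR1
  abs_sub_le z w hz hw := by
    have hRz : ‖R • z‖ = R * ‖z‖ := by rw [norm_smul, Real.norm_of_nonneg hR.le]
    have hRw : ‖R • w‖ = R * ‖w‖ := by rw [norm_smul, Real.norm_of_nonneg hR.le]
    have hz0 : 0 < ‖z‖ := norm_pos_iff.mpr hz
    calc |rescaleKernel d lam R K (z - w) - rescaleKernel d lam R K z|
        = R ^ (d - lam) * |K (R • z - R • w) - K (R • z)| := by
          rw [rescaleKernel, rescaleKernel, smul_sub, ← mul_sub, abs_mul,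
            abs_of_pos (by positivity)]
      _ ≤ R ^ (d - lam) * (C * (R * ‖w‖) / (R * ‖z‖) ^ (d + 1 - lam)) := by
          gcongr
          rw [← hRz, ← hRw]
          exact hK.abs_sub_le _ _ (smul_ne_zero hR.ne' hz) (by rw [hRz, hRw, mul_div_assoc]; gcongr)
      _ = C * ‖w‖ / ‖z‖ ^ (d + 1 - lam) := by
          rw [Real.mul_rpow hR.le hz0.le, show d + 1 - lam = (d - lam) + 1 by ring,
            Real.rpow_add hR, Real.rpow_one]
          field_simp

end Rescale

section Gagliardo

variable {E : Type*} [NormedAddCommGroup E] [NormedSpace ℝ E] [FiniteDimensional ℝ E]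
  [MeasurableSpace E] [BorelSpace E] (μ : Measure E) [μ.IsAddHaarMeasure]

noncomputable def gagliardoLIntegral (μ : Measure E) (s : ℝ) (K : E → ℝ) (x : E) : ℝ≥0∞ :=
  ∫⁻ y, ENNReal.ofReal (|K x - K y| / ‖x - y‖ ^ s) ∂μ

lemma gagliardoLIntegral_eq_mul_rescaleKernel (K : E → ℝ) (lam α : ℝ) {R : ℝ} (hR : 0 < R) (x : E) :
    gagliardoLIntegral μ (finrank ℝ E + α) K x =
      ENNReal.ofReal (R ^ (lam - finrank ℝ E - α)) *
        gagliardoLIntegral μ (finrank ℝ E + α) (rescaleKernel (finrank ℝ E) lam R K) (R⁻¹ • x) := by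
  have hpow : R ^ (lam - finrank ℝ E - α) * R ^ ((finrank ℝ E : ℝ) - lam) *
      R ^ ((finrank ℝ E : ℝ) + α) = R ^ finrank ℝ E := by
    rw [← Real.rpow_add hR, ← Real.rpow_add hR, ← Real.rpow_natCast]
    ring_nf
  rw [gagliardoLIntegral, lintegral_eq_ofReal_mul_lintegral_comp_smul μ _ hR, gagliardoLIntegral,
    ← lintegral_const_mul' _ _ ENNReal.ofReal_ne_top,
    ← lintegral_const_mul' _ _ ENNReal.ofReal_ne_top]
  refine lintegral_congr fun w ↦ ?_
  have hdiff : |rescaleKernel (finrank ℝ E) lam R K (R⁻¹ • x) -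
      rescaleKernel (finrank ℝ E) lam R K w| =
        R ^ ((finrank ℝ E : ℝ) - lam) * |K x - K (R • w)| := by
    rw [rescaleKernel, rescaleKernel, smul_inv_smul₀ hR.ne', ← mul_sub, abs_mul,
      abs_of_pos (by positivity)]
  have hnorm : ‖R⁻¹ • x - w‖ ^ ((finrank ℝ E : ℝ) + α) =
      (R ^ ((finrank ℝ E : ℝ) + α))⁻¹ * ‖x - R • w‖ ^ ((finrank ℝ E : ℝ) + α) := by
    rw [show R⁻¹ • x - w = R⁻¹ • (x - R • w) by rw [smul_sub, inv_smul_smul₀ hR.ne'],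
      norm_smul, Real.norm_of_nonneg (inv_nonneg.mpr hR.le),
      Real.mul_rpow (inv_nonneg.mpr hR.le) (norm_nonneg _), Real.inv_rpow hR.le]
  rw [← ENNReal.ofReal_mul (by positivity), ← ENNReal.ofReal_mul (by positivity), hdiff, hnorm,
    ← hpow]
  congr 1
  field_simp

variable [Nontrivial E] {d lam C α : ℝ} {K : E → ℝ}

lemma IsRieszTypeKernel.gagliardoLIntegral_le_of_norm_eq_one (hK : IsRieszTypeKernel d lam C K)
    (hdα : 0 ≤ d + α) {x : E} (hx : ‖x‖ = 1) :
    gagliardoLIntegral μ (d + α) K x ≤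
      ∫⁻ z, ENNReal.ofReal (C * radialPower (1 / 2) (1 - d - α) (-(d + α)) z) ∂μ +
        ∫⁻ y, ENNReal.ofReal (C * 2 ^ (d + α) * radialPower 2 (lam - d) (lam - 2 * d - α) y)
          ∂μ := by
  have hC := hK.const_nonneg (x := x) (norm_ne_zero_iff.mp (by simp [hx]))
  calc gagliardoLIntegral μ (d + α) K x
      ≤ ∫⁻ y, (ENNReal.ofReal (C * radialPower (1 / 2) (1 - d - α) (-(d + α)) (x - y)) +
          ENNReal.ofReal (C * 2 ^ (d + α) * radialPower 2 (lam - d) (lam - 2 * d - α) y)) ∂μ := by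
        refine lintegral_mono_ae ?_
        filter_upwards [compl_mem_ae_iff.mpr (measure_singleton (0 : E))] with y hy
        have := radialPower_nonneg (1 / 2) (1 - d - α) (-(d + α)) (x - y)
        have := radialPower_nonneg 2 (lam - d) (lam - 2 * d - α) y
        rw [← ENNReal.ofReal_add (by positivity) (by positivity)]
        exact ENNReal.ofReal_le_ofReal (hK.gagliardo_integrand_le hdα hx hy)
    _ = _ := by
        rw [lintegral_add_right _ (measurable_radialPower.const_mul _).ennreal_ofReal,
          lintegral_sub_left_eq_self
            (fun z ↦ ENNReal.ofReal (C * radialPower (1 / 2) (1 - d - α) (-(d + α)) z)) x]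

theorem IsRieszTypeKernel.exists_gagliardoLIntegral_le
    (hK : IsRieszTypeKernel (finrank ℝ E) lam C K) (hlam : 0 < lam)
    (hlam' : lam < finrank ℝ E + α) (hα0 : 0 < α) (hα1 : α < 1) :
    ∃ M < ∞, ∀ x : E, x ≠ 0 → gagliardoLIntegral μ (finrank ℝ E + α) K x ≤
      M * ENNReal.ofReal (‖x‖ ^ (lam - finrank ℝ E - α)) := by
  have hnear := integrable_radialPower μ (p := 1 - finrank ℝ E - α) (q := -(finrank ℝ E + α))
    one_half_pos (by linarith) (by linarith)
  have hfar := integrable_radialPower μ (p := lam - finrank ℝ E) (q := lam - 2 * finrank ℝ E - α)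
    two_pos (by linarith) (by linarith)
  refine ⟨_, ENNReal.add_lt_top.mpr ⟨(hnear.const_mul C).lintegral_lt_top,
    (hfar.const_mul (C * 2 ^ ((finrank ℝ E : ℝ) + α))).lintegral_lt_top⟩,
    fun x hx ↦ ?_⟩
  have hR : 0 < ‖x‖ := norm_pos_iff.mpr hx
  rw [gagliardoLIntegral_eq_mul_rescaleKernel μ K lam α hR x, mul_comm]
  gcongr
  refine (hK.rescale hR).gagliardoLIntegral_le_of_norm_eq_one μ (by positivity) ?_
  rw [norm_smul, norm_inv, norm_norm, inv_mul_cancel₀ hR.ne']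

end Gagliardo

theorem stmt3_general {n : ℕ} (hn : 1 ≤ n) (lam α C : ℝ) (hl0 : 0 < lam) (hln : lam < n)
    (hα0 : 0 < α) (hα1 : α < 1)
    (K : EuclideanSpace ℝ (Fin n) → ℝ)
    (hK1 : ∀ x : EuclideanSpace ℝ (Fin n), x ≠ 0 → |K x| ≤ C * ‖x‖ ^ (lam - n))
    (hK2 : ∀ x y : EuclideanSpace ℝ (Fin n), x ≠ 0 → ‖y‖ ≤ ‖x‖ / 2 →
      |K (x - y) - K x| ≤ C * ‖y‖ / ‖x‖ ^ ((n : ℝ) + 1 - lam)) :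
    ∃ C' > (0 : ℝ), ∀ x : EuclideanSpace ℝ (Fin n), x ≠ 0 →
      ∫⁻ y, ENNReal.ofReal (|K x - K y| / ‖x - y‖ ^ ((n : ℝ) + α)) ≤
        ENNReal.ofReal (C' * ‖x‖ ^ (lam - n - α)) := by
  have : Nontrivial (EuclideanSpace ℝ (Fin n)) :=
    Module.nontrivial_of_finrank_pos (R := ℝ) (by rw [finrank_euclideanSpace_fin]; exact hn)
  have hdim : (finrank ℝ (EuclideanSpace ℝ (Fin n)) : ℝ) = n := by simp
  have hK : IsRieszTypeKernel (finrank ℝ (EuclideanSpace ℝ (Fin n))) lam C K := hdim ▸ ⟨hK1, hK2⟩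
  obtain ⟨M, hM_lt_top, hM⟩ :=
    hK.exists_gagliardoLIntegral_le volume hl0 (by rw [hdim]; linarith) hα0 hα1
  refine ⟨M.toReal + 1, by positivity, fun x hx ↦ ?_⟩
  calc ∫⁻ y, ENNReal.ofReal (|K x - K y| / ‖x - y‖ ^ ((n : ℝ) + α))
      ≤ M * ENNReal.ofReal (‖x‖ ^ (lam - n - α)) := by
        simpa only [hdim, gagliardoLIntegral] using hM x hx
    _ ≤ ENNReal.ofReal (M.toReal + 1) * ENNReal.ofReal (‖x‖ ^ (lam - n - α)) := by
        gcongr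
        exact (ENNReal.le_ofReal_iff_toReal_le hM_lt_top.ne (by positivity)).mpr (by linarith)
    _ = ENNReal.ofReal ((M.toReal + 1) * ‖x‖ ^ (lam - n - α)) :=
        (ENNReal.ofReal_mul (by positivity)).symm

theorem stmt3 {n : ℕ} (hn : 1 ≤ n) (lam α C : ℝ) (hl0 : 0 < lam) (hln : lam < n)
    (hα0 : 0 < α) (hα1 : α < 1) (hC : 0 < C)
    (K : EuclideanSpace ℝ (Fin n) → ℝ)
    (hK1 : ∀ x : EuclideanSpace ℝ (Fin n), x ≠ 0 → |K x| ≤ C * ‖x‖ ^ (lam - n))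
    (hK2 : ∀ x y : EuclideanSpace ℝ (Fin n), x ≠ 0 → ‖y‖ ≤ ‖x‖ / 2 →
      |K (x - y) - K x| ≤ C * ‖y‖ / ‖x‖ ^ ((n : ℝ) + 1 - lam)) :
    ∃ C' > (0 : ℝ), ∀ x : EuclideanSpace ℝ (Fin n), x ≠ 0 →
      ∫⁻ y, ENNReal.ofReal (|K x - K y| / ‖x - y‖ ^ ((n : ℝ) + α)) ≤
        ENNReal.ofReal (C' * ‖x‖ ^ (lam - n - α)) :=
  stmt3_general hn lam α C hl0 hln hα0 hα1 K hK1 hK2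
end

section
/- Let $\alpha,\beta>0$ with $\alpha+\beta<n$. Then for every $x\in\mathbb{R}^n\setminus\{0\}$, $\int_{\mathbb{R}^n}\frac{|y|^{\alpha-n}}{|x-y|^{n-\beta}}\,dy = \frac{\gamma(\alpha)\gamma(\beta)}{\gamma(\alpha+\beta)}\,|x|^{\alpha+\beta-n}$, where $\gamma(s)=\pi^{n/2}2^{s}\Gamma(s/2)/\Gamma((n-s)/2)$. -/
/-!
Subordination: for `s > 0` and `r > 0`, `Γ(s) r^(-2s) = ∫₀^∞ t^(s-1) e^(-r² t) dt`. Writing both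
kernels this way and integrating in `y` first, the `y`-integral is the Gaussian convolution
`(π/(t+u))^(n/2) e^(-tu/(t+u) |x|²)`. The substitution `u = t w` then splits the remaining double
integral into a Gamma integral in `t` and the Beta integral
`∫₀^∞ w^(p-1) (1+w)^(-(p+q)) dw = Γ(p)Γ(q)/Γ(p+q)` in `w`. Working with lower Lebesgue integrals
throughout, Tonelli applies without any integrability bookkeeping.
-/

open MeasureTheory

noncomputable def gconst (n : ℕ) (s : ℝ) : ℝ :=
  Real.pi ^ ((n : ℝ) / 2) * 2 ^ s * Real.Gamma (s / 2) / Real.Gamma (((n : ℝ) - s) / 2)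

open Real Set
open scoped ENNReal

lemma lintegral_rpow_mul_exp_neg_mul_Ioi {a r : ℝ} (ha : 0 < a) (hr : 0 < r) :
    ∫⁻ t in Ioi (0 : ℝ), ENNReal.ofReal (t ^ (a - 1) * rexp (-(r * t))) =
      ENNReal.ofReal (Gamma a * r ^ (-a)) := by
  have hΓ := integral_rpow_mul_exp_neg_mul_Ioi ha hr
  rw [← ofReal_integral_eq_lintegral_ofReal, hΓ, one_div, inv_rpow hr.le, rpow_neg hr.le, mul_comm]
  · exact Integrable.of_integral_ne_zero (by rw [hΓ]; have := Gamma_pos_of_pos ha; positivity)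
  · filter_upwards [ae_restrict_mem measurableSet_Ioi] with t (ht : 0 < t)
    positivity

lemma lintegral_Ioi_zero_eq_ofReal_mul_lintegral_comp_mul_left (g : ℝ → ℝ≥0∞) {c : ℝ}
    (hc : 0 < c) :
    ∫⁻ t in Ioi (0 : ℝ), g t = ENNReal.ofReal c * ∫⁻ v in Ioi (0 : ℝ), g (c * v) := by
  have h := lintegral_image_eq_lintegral_abs_deriv_mul (s := Ioi 0) (f := (c * ·))
    (f' := fun _ => c) measurableSet_Ioi (fun _ _ => (hasDerivAt_const_mul c).hasDerivWithinAt)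
    (mul_right_injective₀ hc.ne').injOn g
  rw [image_mul_left_Ioi hc, mul_zero] at h
  simpa [abs_of_pos hc, lintegral_const_mul' _ _ ENNReal.ofReal_ne_top] using h

lemma eq_ofReal_of_ofReal_mul_eq {c d : ℝ} {I : ℝ≥0∞} (hc : 0 < c)
    (h : ENNReal.ofReal c * I = ENNReal.ofReal (c * d)) : I = ENNReal.ofReal d := by
  rwa [ENNReal.ofReal_mul hc.le,
    ENNReal.mul_right_inj (by simpa using hc) ENNReal.ofReal_ne_top] at h

lemma lintegral_rpow_mul_one_add_rpow_neg_Ioi {p q : ℝ} (hp : 0 < p) (hq : 0 < q) :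
    ∫⁻ v in Ioi (0 : ℝ), ENNReal.ofReal (v ^ (p - 1) * (1 + v) ^ (-(p + q))) =
      ENNReal.ofReal (Gamma p * Gamma q / Gamma (p + q)) := by
  have hpq : 0 < p + q := by linarith
  have hΓ : 0 < Gamma (p + q) := Gamma_pos_of_pos hpq
  refine eq_ofReal_of_ofReal_mul_eq hΓ ?_
  rw [mul_div_cancel₀ _ hΓ.ne', ← lintegral_const_mul' _ _ ENNReal.ofReal_ne_top]
  calc ∫⁻ v in Ioi (0 : ℝ), ENNReal.ofReal (Gamma (p + q)) *
        ENNReal.ofReal (v ^ (p - 1) * (1 + v) ^ (-(p + q)))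
      = ∫⁻ v in Ioi (0 : ℝ), ∫⁻ s in Ioi (0 : ℝ), ENNReal.ofReal (s ^ (p + q - 1) * rexp (-s)) *
          ENNReal.ofReal (v ^ (p - 1) * rexp (-(s * v))) := by
        refine setLIntegral_congr_fun measurableSet_Ioi fun v (hv : 0 < v) => ?_
        rw [← ENNReal.ofReal_mul hΓ.le, mul_left_comm, ENNReal.ofReal_mul (by positivity),
          ← lintegral_rpow_mul_exp_neg_mul_Ioi hpq (by linarith : 0 < 1 + v),
          ← lintegral_const_mul' _ _ ENNReal.ofReal_ne_top]
        refine setLIntegral_congr_fun measurableSet_Ioi fun s (hs : 0 < s) => ?_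
        rw [← ENNReal.ofReal_mul (by positivity), ← ENNReal.ofReal_mul (by positivity),
          show -((1 + v) * s) = -s + -(s * v) by ring, exp_add]
        ring_nf
    _ = ∫⁻ s in Ioi (0 : ℝ), ENNReal.ofReal (s ^ (p + q - 1) * rexp (-s)) *
          ENNReal.ofReal (Gamma p * s ^ (-p)) := by
        rw [lintegral_lintegral_swap (by fun_prop)]
        refine setLIntegral_congr_fun measurableSet_Ioi fun s (hs : 0 < s) => ?_
        rw [lintegral_const_mul' _ _ ENNReal.ofReal_ne_top,
          lintegral_rpow_mul_exp_neg_mul_Ioi hp hs]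
    _ = ∫⁻ s in Ioi (0 : ℝ), ENNReal.ofReal (Gamma p) *
          ENNReal.ofReal (s ^ (q - 1) * rexp (-(1 * s))) := by
        refine setLIntegral_congr_fun measurableSet_Ioi fun s (hs : 0 < s) => ?_
        rw [← ENNReal.ofReal_mul (by positivity), ← ENNReal.ofReal_mul (Gamma_pos_of_pos hp).le,
          one_mul, show q - 1 = (p + q - 1) + -p by ring, rpow_add hs]
        ring_nf
    _ = ENNReal.ofReal (Gamma p * Gamma q) := by
        rw [lintegral_const_mul' _ _ ENNReal.ofReal_ne_top,
          lintegral_rpow_mul_exp_neg_mul_Ioi hq one_pos, one_rpow, mul_one,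
          ENNReal.ofReal_mul (Gamma_pos_of_pos hp).le]

lemma lintegral_rpow_mul_rpow_mul_exp_neg_mul_div_add_Ioi_Ioi {a b m R : ℝ}
    (ha : a < m) (hb : b < m) (hab : m < a + b) (hR : 0 < R) :
    ∫⁻ t in Ioi (0 : ℝ), ∫⁻ u in Ioi (0 : ℝ),
      ENNReal.ofReal (t ^ (a - 1) * u ^ (b - 1) * (t + u) ^ (-m) * rexp (-(t * u / (t + u) * R))) =
      ENNReal.ofReal (Gamma (m - a) * Gamma (m - b) / Gamma (2 * m - a - b) *
        (Gamma (a + b - m) * R ^ (-(a + b - m)))) := by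
  set c := a + b - m with hc_def
  have hc : 0 < c := by linarith
  have substitute : ∀ t : ℝ, 0 < t → ∫⁻ u in Ioi (0 : ℝ),
      ENNReal.ofReal (t ^ (a - 1) * u ^ (b - 1) * (t + u) ^ (-m) * rexp (-(t * u / (t + u) * R))) =
      ∫⁻ w in Ioi (0 : ℝ), ENNReal.ofReal (w ^ (b - 1) * (1 + w) ^ (-m)) *
        ENNReal.ofReal (t ^ (c - 1) * rexp (-(R * w / (1 + w) * t))) := by
    intro t ht
    rw [lintegral_Ioi_zero_eq_ofReal_mul_lintegral_comp_mul_left _ ht,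
      ← lintegral_const_mul' _ _ ENNReal.ofReal_ne_top]
    refine setLIntegral_congr_fun measurableSet_Ioi fun w (hw : 0 < w) => ?_
    rw [← ENNReal.ofReal_mul ht.le, ← ENNReal.ofReal_mul (by positivity)]
    have ht_pow : t * t ^ (a - 1) * t ^ (b - 1) * t ^ (-m) = t ^ (c - 1) := by
      rw [← rpow_one_add' ht.le (by linarith), ← rpow_add ht, ← rpow_add ht, hc_def]
      ring_nf
    rw [mul_rpow ht.le hw.le, show t + t * w = t * (1 + w) by ring, mul_rpow ht.le (by positivity),
      show t * (t * w) / (t * (1 + w)) * R = R * w / (1 + w) * t by field_simp, ← ht_pow]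
    congr 1
    ring
  have integrate_t : ∀ w : ℝ, 0 < w → ∫⁻ t in Ioi (0 : ℝ),
      ENNReal.ofReal (w ^ (b - 1) * (1 + w) ^ (-m)) *
        ENNReal.ofReal (t ^ (c - 1) * rexp (-(R * w / (1 + w) * t))) =
      ENNReal.ofReal (Gamma c * R ^ (-c)) *
        ENNReal.ofReal (w ^ (m - a - 1) * (1 + w) ^ (-((m - a) + (m - b)))) := by
    intro w hw
    rw [lintegral_const_mul' _ _ ENNReal.ofReal_ne_top,
      lintegral_rpow_mul_exp_neg_mul_Ioi hc (by positivity),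
      ← ENNReal.ofReal_mul (by positivity), ← ENNReal.ofReal_mul (by positivity),
      div_rpow (by positivity) (by positivity), mul_rpow hR.le hw.le]
    have hw_pow : w ^ (m - a - 1) = w ^ (b - 1) * w ^ (-c) := by
      rw [← rpow_add hw, hc_def]; ring_nf
    have hw_pow' : (1 + w) ^ (-((m - a) + (m - b))) = (1 + w) ^ (-m) / (1 + w) ^ (-c) := by
      rw [← rpow_sub (by positivity), hc_def]; ring_nf
    rw [hw_pow, hw_pow']
    field_simp
  calc _ = ∫⁻ t in Ioi (0 : ℝ), ∫⁻ w in Ioi (0 : ℝ),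
          ENNReal.ofReal (w ^ (b - 1) * (1 + w) ^ (-m)) *
            ENNReal.ofReal (t ^ (c - 1) * rexp (-(R * w / (1 + w) * t))) :=
        setLIntegral_congr_fun measurableSet_Ioi substitute
    _ = ∫⁻ w in Ioi (0 : ℝ), ENNReal.ofReal (Gamma c * R ^ (-c)) *
          ENNReal.ofReal (w ^ (m - a - 1) * (1 + w) ^ (-((m - a) + (m - b)))) := by
        rw [lintegral_lintegral_swap (by fun_prop)]
        exact setLIntegral_congr_fun measurableSet_Ioi integrate_t
    _ = _ := by
        rw [lintegral_const_mul' _ _ ENNReal.ofReal_ne_top,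
          lintegral_rpow_mul_one_add_rpow_neg_Ioi (by linarith) (by linarith),
          ← ENNReal.ofReal_mul (by positivity), mul_comm]
        ring_nf

lemma ofReal_Gamma_mul_rpow_neg_two_mul_eq_lintegral {a r : ℝ} (ha : 0 < a) (hr : 0 < r) :
    ENNReal.ofReal (Gamma a * r ^ (-(2 * a))) =
      ∫⁻ t in Ioi (0 : ℝ), ENNReal.ofReal (t ^ (a - 1) * rexp (-(r ^ 2 * t))) := by
  rw [lintegral_rpow_mul_exp_neg_mul_Ioi ha (by positivity), ← rpow_natCast, ← rpow_mul hr.le]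
  ring_nf

variable {V : Type*} [NormedAddCommGroup V] [InnerProductSpace ℝ V] [FiniteDimensional ℝ V]
  [MeasurableSpace V] [BorelSpace V]

lemma lintegral_rexp_neg_mul_sq_norm {b : ℝ} (hb : 0 < b) :
    ∫⁻ y : V, ENNReal.ofReal (rexp (-b * ‖y‖ ^ 2)) =
      ENNReal.ofReal ((π / b) ^ (Module.finrank ℝ V / 2 : ℝ)) := by
  have h := GaussianFourier.integral_rexp_neg_mul_sq_norm (V := V) hb
  rw [← h, ofReal_integral_eq_lintegral_ofReal _ (ae_of_all _ fun _ => (exp_pos _).le)]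
  exact Integrable.of_integral_ne_zero (by rw [h]; positivity)

lemma lintegral_rexp_neg_mul_sq_norm_mul_rexp_neg_mul_sq_norm_sub (x : V) {t u : ℝ}
    (ht : 0 < t) (hu : 0 < u) :
    ∫⁻ y : V, ENNReal.ofReal (rexp (-t * ‖y‖ ^ 2) * rexp (-u * ‖x - y‖ ^ 2)) =
      ENNReal.ofReal ((π / (t + u)) ^ (Module.finrank ℝ V / 2 : ℝ) *
        rexp (-(t * u / (t + u)) * ‖x‖ ^ 2)) := by
  have htu : 0 < t + u := by linarith
  have complete_square : ∀ y : V, -t * ‖y‖ ^ 2 + -u * ‖x - y‖ ^ 2 =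
      -(t + u) * ‖y - (u / (t + u)) • x‖ ^ 2 + -(t * u / (t + u)) * ‖x‖ ^ 2 := by
    intro y
    rw [norm_sub_sq_real, norm_sub_sq_real, inner_smul_right, norm_smul, real_inner_comm,
      Real.norm_of_nonneg (by positivity)]
    field_simp
    ring
  simp_rw [← exp_add, complete_square, exp_add, ENNReal.ofReal_mul (exp_pos _).le]
  rw [lintegral_mul_const' _ _ ENNReal.ofReal_ne_top,
    lintegral_sub_right_eq_self (fun y => ENNReal.ofReal (rexp (-(t + u) * ‖y‖ ^ 2))),
    lintegral_rexp_neg_mul_sq_norm htu, ← ENNReal.ofReal_mul (by positivity)]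

lemma ofReal_Gamma_mul_Gamma_mul_lintegral_norm_rpow_mul_norm_sub_rpow [Nontrivial V] (x : V)
    {a b : ℝ} (ha : 0 < a) (hb : 0 < b) :
    ENNReal.ofReal (Gamma a * Gamma b) *
        ∫⁻ y : V, ENNReal.ofReal (‖y‖ ^ (-(2 * a)) * ‖x - y‖ ^ (-(2 * b))) =
      ENNReal.ofReal (π ^ (Module.finrank ℝ V / 2 : ℝ)) *
        ∫⁻ t in Ioi (0 : ℝ), ∫⁻ u in Ioi (0 : ℝ), ENNReal.ofReal (t ^ (a - 1) * u ^ (b - 1) *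
          (t + u) ^ (-(Module.finrank ℝ V / 2 : ℝ)) * rexp (-(t * u / (t + u) * ‖x‖ ^ 2))) := by
  have subordinate : ∀ᵐ y : V, ENNReal.ofReal (Gamma a * Gamma b) *
      ENNReal.ofReal (‖y‖ ^ (-(2 * a)) * ‖x - y‖ ^ (-(2 * b))) =
      ∫⁻ t in Ioi (0 : ℝ), ∫⁻ u in Ioi (0 : ℝ),
        ENNReal.ofReal (t ^ (a - 1) * rexp (-(‖y‖ ^ 2 * t))) *
          ENNReal.ofReal (u ^ (b - 1) * rexp (-(‖x - y‖ ^ 2 * u))) := by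
    -- Only a.e.: at `y = 0` the left side is `0` (as `0 ^ (-2a) = 0`), the right side `∞`.
    filter_upwards [Measure.ae_ne volume 0, Measure.ae_ne volume x] with y hy0 hyx
    rw [lintegral_lintegral_mul (by fun_prop) (by fun_prop),
      ← ofReal_Gamma_mul_rpow_neg_two_mul_eq_lintegral ha (norm_pos_iff.2 hy0),
      ← ofReal_Gamma_mul_rpow_neg_two_mul_eq_lintegral hb (norm_pos_iff.2 (sub_ne_zero.2 hyx.symm)),
      ← ENNReal.ofReal_mul (by positivity), ← ENNReal.ofReal_mul (by positivity)]
    congr 1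
    ring
  have gaussian : ∀ t : ℝ, 0 < t → ∀ u : ℝ, 0 < u → ∫⁻ y : V,
      ENNReal.ofReal (t ^ (a - 1) * rexp (-(‖y‖ ^ 2 * t))) *
        ENNReal.ofReal (u ^ (b - 1) * rexp (-(‖x - y‖ ^ 2 * u))) =
      ENNReal.ofReal (π ^ (Module.finrank ℝ V / 2 : ℝ)) *
        ENNReal.ofReal (t ^ (a - 1) * u ^ (b - 1) * (t + u) ^ (-(Module.finrank ℝ V / 2 : ℝ)) *
          rexp (-(t * u / (t + u) * ‖x‖ ^ 2))) := by
    intro t ht u hu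
    calc _ = ∫⁻ y : V, ENNReal.ofReal (t ^ (a - 1) * u ^ (b - 1)) *
          ENNReal.ofReal (rexp (-t * ‖y‖ ^ 2) * rexp (-u * ‖x - y‖ ^ 2)) := by
          refine lintegral_congr fun y => ?_
          rw [← ENNReal.ofReal_mul (by positivity), ← ENNReal.ofReal_mul (by positivity)]
          ring_nf
      _ = _ := by
          rw [lintegral_const_mul _ (by fun_prop),
            lintegral_rexp_neg_mul_sq_norm_mul_rexp_neg_mul_sq_norm_sub x ht hu,
            ← ENNReal.ofReal_mul (by positivity), ← ENNReal.ofReal_mul (by positivity),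
            div_rpow pi_pos.le (by positivity), rpow_neg (by positivity), neg_mul]
          congr 1
          ring
  calc _ = ∫⁻ y : V, ∫⁻ t in Ioi (0 : ℝ), ∫⁻ u in Ioi (0 : ℝ),
          ENNReal.ofReal (t ^ (a - 1) * rexp (-(‖y‖ ^ 2 * t))) *
            ENNReal.ofReal (u ^ (b - 1) * rexp (-(‖x - y‖ ^ 2 * u))) := by
        rw [← lintegral_const_mul _ (by fun_prop)]
        exact lintegral_congr_ae subordinate
    _ = ∫⁻ t in Ioi (0 : ℝ), ∫⁻ u in Ioi (0 : ℝ), ∫⁻ y : V,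
          ENNReal.ofReal (t ^ (a - 1) * rexp (-(‖y‖ ^ 2 * t))) *
            ENNReal.ofReal (u ^ (b - 1) * rexp (-(‖x - y‖ ^ 2 * u))) := by
        rw [lintegral_lintegral_swap (by fun_prop)]
        refine lintegral_congr fun t => ?_
        rw [lintegral_lintegral_swap (by fun_prop)]
    _ = _ := by
        rw [← lintegral_const_mul _ (by fun_prop)]
        refine setLIntegral_congr_fun measurableSet_Ioi fun t (ht : 0 < t) => ?_
        rw [← lintegral_const_mul _ (by fun_prop)]
        exact setLIntegral_congr_fun measurableSet_Ioi (gaussian t ht)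

theorem lintegral_norm_rpow_mul_norm_sub_rpow (x : V) (hx : x ≠ 0) {α β : ℝ} (hα : 0 < α)
    (hβ : 0 < β) (hαβ : α + β < Module.finrank ℝ V) :
    ∫⁻ y : V, ENNReal.ofReal (‖y‖ ^ (α - Module.finrank ℝ V) * ‖x - y‖ ^ (β - Module.finrank ℝ V)) =
      ENNReal.ofReal (π ^ (Module.finrank ℝ V / 2 : ℝ) *
        (Gamma (α / 2) * Gamma (β / 2) * Gamma ((Module.finrank ℝ V - α - β) / 2)) /
        (Gamma ((Module.finrank ℝ V - α) / 2) * Gamma ((Module.finrank ℝ V - β) / 2) *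
          Gamma ((α + β) / 2)) * ‖x‖ ^ (α + β - Module.finrank ℝ V)) := by
  set d : ℝ := (Module.finrank ℝ V : ℝ) with hd
  have : Nontrivial V :=
    Module.nontrivial_of_finrank_pos (R := ℝ) (by rw [← Nat.cast_pos (α := ℝ)]; linarith)
  have ha : 0 < (d - α) / 2 := by linarith
  have hb : 0 < (d - β) / 2 := by linarith
  have hΓ := mul_pos (Gamma_pos_of_pos ha) (Gamma_pos_of_pos hb)
  have h := ofReal_Gamma_mul_Gamma_mul_lintegral_norm_rpow_mul_norm_sub_rpow x ha hb
  rw [← hd, lintegral_rpow_mul_rpow_mul_exp_neg_mul_div_add_Ioi_Ioi (by linarith) (by linarith)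
      (by linarith) (by positivity), ← ENNReal.ofReal_mul (by positivity),
    show -(2 * ((d - α) / 2)) = α - d by ring, show -(2 * ((d - β) / 2)) = β - d by ring] at h
  refine eq_ofReal_of_ofReal_mul_eq hΓ (h.trans (congrArg ENNReal.ofReal ?_))
  have hx2 : (‖x‖ ^ 2) ^ (-((d - α) / 2 + (d - β) / 2 - d / 2)) = ‖x‖ ^ (α + β - d) := by
    rw [← rpow_natCast, ← rpow_mul (norm_nonneg x)]
    ring_nf
  rw [hx2, show d / 2 - (d - α) / 2 = α / 2 by ring, show d / 2 - (d - β) / 2 = β / 2 by ring,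
    show 2 * (d / 2) - (d - α) / 2 - (d - β) / 2 = (α + β) / 2 by ring,
    show (d - α) / 2 + (d - β) / 2 - d / 2 = (d - α - β) / 2 by ring]
  have := Gamma_pos_of_pos (by linarith : 0 < (α + β) / 2)
  field_simp

lemma gconst_pos {n : ℕ} {s : ℝ} (hs : 0 < s) (hsn : s < n) : 0 < gconst n s := by
  have := Gamma_pos_of_pos (by linarith : 0 < s / 2)
  have := Gamma_pos_of_pos (by linarith : 0 < ((n : ℝ) - s) / 2)
  unfold gconst
  positivity

lemma gconst_mul_gconst_div_gconst {n : ℕ} {α β : ℝ} (hα : 0 < α) (hβ : 0 < β)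
    (hαβ : α + β < n) :
    gconst n α * gconst n β / gconst n (α + β) =
      π ^ (n / 2 : ℝ) * (Gamma (α / 2) * Gamma (β / 2) * Gamma ((n - α - β) / 2)) /
        (Gamma ((n - α) / 2) * Gamma ((n - β) / 2) * Gamma ((α + β) / 2)) := by
  have := Gamma_pos_of_pos (by linarith : 0 < ((n : ℝ) - α) / 2)
  have := Gamma_pos_of_pos (by linarith : 0 < ((n : ℝ) - β) / 2)
  have := Gamma_pos_of_pos (by linarith : 0 < ((n : ℝ) - α - β) / 2)
  have := Gamma_pos_of_pos (by linarith : 0 < (α + β) / 2)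
  unfold gconst
  rw [rpow_add two_pos, show ((n : ℝ) - (α + β)) / 2 = (n - α - β) / 2 by ring]
  field_simp

theorem stmt4_general {n : ℕ} (α β : ℝ) (hα : 0 < α) (hβ : 0 < β) (hαβ : α + β < n)
    (x : EuclideanSpace ℝ (Fin n)) (hx : x ≠ 0) :
    ∫ y : EuclideanSpace ℝ (Fin n), ‖y‖ ^ (α - n) / ‖x - y‖ ^ ((n : ℝ) - β) =
      gconst n α * gconst n β / gconst n (α + β) * ‖x‖ ^ (α + β - n) := by
  have hdim : Module.finrank ℝ (EuclideanSpace ℝ (Fin n)) = n := finrank_euclideanSpace_fin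
  have h := lintegral_norm_rpow_mul_norm_sub_rpow x hx hα hβ (by rwa [hdim])
  rw [hdim, ← gconst_mul_gconst_div_gconst hα hβ hαβ] at h
  have hγ : 0 < gconst n α * gconst n β / gconst n (α + β) :=
    div_pos (mul_pos (gconst_pos hα (by linarith)) (gconst_pos hβ (by linarith)))
      (gconst_pos (add_pos hα hβ) hαβ)
  have hdiv : ∀ y : EuclideanSpace ℝ (Fin n),
      ‖y‖ ^ (α - n) / ‖x - y‖ ^ ((n : ℝ) - β) = ‖y‖ ^ (α - n) * ‖x - y‖ ^ (β - n) := fun y => by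
    rw [div_eq_mul_inv, ← rpow_neg (norm_nonneg _), neg_sub]
  simp_rw [hdiv]
  rw [integral_eq_lintegral_of_nonneg_ae (ae_of_all _ fun y => by positivity) (by fun_prop), h,
    ENNReal.toReal_ofReal (mul_nonneg hγ.le (by positivity))]

theorem stmt4 {n : ℕ} (hn : 1 ≤ n) (α β : ℝ) (hα : 0 < α) (hβ : 0 < β) (hαβ : α + β < n)
    (x : EuclideanSpace ℝ (Fin n)) (hx : x ≠ 0) :
    ∫ y : EuclideanSpace ℝ (Fin n), ‖y‖ ^ (α - n) / ‖x - y‖ ^ ((n : ℝ) - β) =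
      gconst n α * gconst n β / gconst n (α + β) * ‖x‖ ^ (α + β - n) :=
  stmt4_general α β hα hβ hαβ x hx
end

section
/- Let $a,b>0$, $m>0$, $\gamma\in(0,1)$. Then $|a^{-m}-b^{-m}| \le m\left(\frac{1-\gamma}{m+\gamma}\right)^{1-\gamma}|a-b|^{\gamma}\,(a^{-m-\gamma}+b^{-m-\gamma})$. -/
/-!
For `a ≤ b`, write `a ^ (-m) - b ^ (-m) = m ∫_a^b t ^ (-m - 1) dt` and apply Hölder's inequality
with exponents `1 / γ` and `1 / (1 - γ)` against the constant `1`: this gives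
`(b - a) ^ γ * (∫_a^∞ t ^ (-(m + 1) / (1 - γ)) dt) ^ (1 - γ)`, and the last integral equals
`(1 - γ) / (m + γ) * a ^ (-(m + γ) / (1 - γ))`.
-/

open MeasureTheory Set Real

theorem integral_le_measureReal_univ_rpow_mul {α : Type*} [MeasurableSpace α] {μ : Measure α}
    [IsFiniteMeasure μ] {p q : ℝ} (hpq : p.HolderConjugate q) {g : α → ℝ}
    (hg_nonneg : 0 ≤ᵐ[μ] g) (hg : MemLp g (ENNReal.ofReal q) μ) :
    ∫ x, g x ∂μ ≤ μ.real univ ^ (1 / p) * (∫ x, g x ^ q ∂μ) ^ (1 / q) := by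
  simpa [one_rpow] using integral_mul_le_Lp_mul_Lq_of_nonneg hpq
    (f := fun _ => (1 : ℝ)) (ae_of_all _ fun _ => zero_le_one) hg_nonneg (memLp_const 1) hg

theorem integral_rpow_neg_sub_one {a b s : ℝ} (ha : 0 < a) (hb : 0 < b) (hs : s ≠ 0) :
    ∫ t in a..b, t ^ (-s - 1) = (a ^ (-s) - b ^ (-s)) / s := by
  rw [integral_rpow (Or.inr ⟨by contrapose! hs; linarith, notMem_uIcc_of_lt ha hb⟩),
    show -s - 1 + 1 = -s by ring, div_neg, ← neg_div, neg_sub]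

theorem rpow_neg_sub_rpow_neg_le {a b m γ : ℝ} (ha : 0 < a) (hab : a ≤ b) (hm : 0 < m)
    (hγ0 : 0 < γ) (hγ1 : γ < 1) :
    a ^ (-m) - b ^ (-m) ≤ m * ((1 - γ) / (m + γ)) ^ (1 - γ) * (b - a) ^ γ * a ^ (-(m + γ)) := by
  have hb : 0 < b := ha.trans_le hab
  set s := (m + γ) / (1 - γ) with hs_def
  have hγ' : 1 - γ ≠ 0 := by linarith
  have hs : 0 < s := div_pos (by linarith) (by linarith)
  have hpq : (1 / γ).HolderConjugate (1 / (1 - γ)) :=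
    holderConjugate_one_div hγ0 (by linarith) (by ring)
  have hg : MemLp (fun t : ℝ => t ^ (-m - 1)) (ENNReal.ofReal (1 / (1 - γ)))
      (volume.restrict (Ioc a b)) :=
    (AntitoneOn.memLp_isCompact isCompact_Icc fun x hx y _ hxy =>
      rpow_le_rpow_of_nonpos (ha.trans_le hx.1) hxy (by linarith)).mono_measure
      (Measure.restrict_mono Ioc_subset_Icc_self le_rfl)
  have hholder := integral_le_measureReal_univ_rpow_mul hpq
    ((ae_restrict_iff' measurableSet_Ioc).2 (ae_of_all _ fun t ht =>
      rpow_nonneg (ha.trans ht.1).le _)) hg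
  have hpow : ∫ t in Ioc a b, (t ^ (-m - 1)) ^ (1 / (1 - γ)) = (a ^ (-s) - b ^ (-s)) / s := by
    rw [← intervalIntegral.integral_of_le hab, ← integral_rpow_neg_sub_one ha hb hs.ne']
    refine intervalIntegral.integral_congr fun t ht => ?_
    rw [uIcc_of_le hab] at ht
    rw [← rpow_mul (ha.trans_le ht.1).le]
    congr 1
    rw [hs_def]
    field_simp
    ring
  simp only [one_div_one_div, measureReal_restrict_apply_univ, Real.volume_real_Ioc_of_le hab,
    hpow] at hholder
  calc a ^ (-m) - b ^ (-m) = m * ∫ t in Ioc a b, t ^ (-m - 1) := by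
        rw [← intervalIntegral.integral_of_le hab, integral_rpow_neg_sub_one ha hb hm.ne']
        field_simp
    _ ≤ m * ((b - a) ^ γ * ((a ^ (-s) - b ^ (-s)) / s) ^ (1 - γ)) := by gcongr
    _ ≤ m * ((b - a) ^ γ * (a ^ (-s) / s) ^ (1 - γ)) := by
        have : b ^ (-s) ≤ a ^ (-s) := rpow_le_rpow_of_nonpos ha hab (by linarith)
        have : 0 ≤ b ^ (-s) := rpow_nonneg hb.le _
        gcongr
        linarith
    _ = m * ((1 - γ) / (m + γ)) ^ (1 - γ) * (b - a) ^ γ * a ^ (-(m + γ)) := by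
        rw [div_eq_mul_inv, mul_rpow (rpow_nonneg ha.le _) (inv_nonneg.2 hs.le), ← rpow_mul ha.le,
          hs_def, inv_div, show -((m + γ) / (1 - γ)) * (1 - γ) = -(m + γ) by field_simp]
        ring

theorem stmt8 (a b m γ : ℝ) (ha : 0 < a) (hb : 0 < b) (hm : 0 < m)
    (hγ0 : 0 < γ) (hγ1 : γ < 1) :
    |a ^ (-m) - b ^ (-m)| ≤
      m * ((1 - γ) / (m + γ)) ^ (1 - γ) * |a - b| ^ γ *
        (a ^ (-(m + γ)) + b ^ (-(m + γ))) := by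
  wlog hab : a ≤ b generalizing a b
  · simpa only [abs_sub_comm, add_comm] using this b a hb ha (le_of_not_ge hab)
  have hba : b ^ (-m) ≤ a ^ (-m) := rpow_le_rpow_of_nonpos ha hab (by linarith)
  rw [abs_of_nonneg (sub_nonneg.2 hba), abs_sub_comm, abs_of_nonneg (sub_nonneg.2 hab)]
  calc a ^ (-m) - b ^ (-m)
      ≤ m * ((1 - γ) / (m + γ)) ^ (1 - γ) * (b - a) ^ γ * a ^ (-(m + γ)) :=
        rpow_neg_sub_rpow_neg_le ha hab hm hγ0 hγ1
    _ ≤ m * ((1 - γ) / (m + γ)) ^ (1 - γ) * (b - a) ^ γ * (a ^ (-(m + γ)) + b ^ (-(m + γ))) := by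
        gcongr
        exact le_add_of_nonneg_right (rpow_nonneg hb.le _)
end

section
/- Let $n\ge 2$, let $\rho_0\in C_c^\infty((0,\infty))$ with $0\le\rho_0\le 1$, $\rho_0(t)=1$ for $t\le 1/4$ and $\rho_0(t)=0$ for $t\ge 1/2$, and set $\rho(y,x)=\rho_0(|y|/|x|)$. Let $\mathbf{f}\in L^1_{loc}(\mathbb{R}^n,\mathbb{R}^n)$ with $\operatorname{div}\mathbf{f}=0$ in the distributional sense and assume $|y|\,|\mathbf{f}(y)|$ is integrable on $\{|y|\le |x|/2\}$. Then for every $x\neq 0$, $\left|\int_{\mathbb{R}^n}\rho(y,x)\,\mathbf{f}(y)\,dy\right| \le C\int_{|y|\le |x|/2}\frac{|y|}{|x|}\,|\mathbf{f}(y)|\,dy$, with $C$ depending only on $\rho_0$. -/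
open MeasureTheory

lemma hasFDerivAt_norm' {E : Type*} [NormedAddCommGroup E] [InnerProductSpace ℝ E]
    {x : E} (hx : x ≠ 0) :
    HasFDerivAt (fun y : E => ‖y‖) (‖x‖⁻¹ • innerSL ℝ x) x := by
  have h2 : (0:ℝ) < ‖x‖ := norm_pos_iff.mpr hx
  have h1 : HasFDerivAt (fun y : E => Real.sqrt (‖y‖ ^ 2))
      ((1 / (2 * Real.sqrt (‖x‖^2))) • (2 • innerSL ℝ x)) x :=
    (Real.hasDerivAt_sqrt (by positivity)).comp_hasFDerivAt x
      (hasStrictFDerivAt_norm_sq x).hasFDerivAt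
  have heq : (fun y : E => Real.sqrt (‖y‖ ^ 2)) = fun y : E => ‖y‖ := by
    funext y; rw [Real.sqrt_sq (norm_nonneg y)]
  rw [heq] at h1
  convert h1 using 1
  rw [Real.sqrt_sq (norm_nonneg x)]
  ext v
  simp [smul_smul]
  ring

set_option maxHeartbeats 1000000 in
theorem stmt11 {n : ℕ} (hn : 2 ≤ n) (ρ₀ : ℝ → ℝ) (hρsmooth : ContDiff ℝ (⊤ : ℕ∞) ρ₀)
    (hρ1 : ∀ t : ℝ, t ≤ 1 / 4 → ρ₀ t = 1) (hρ0 : ∀ t : ℝ, 1 / 2 ≤ t → ρ₀ t = 0)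
    (hρrange : ∀ t : ℝ, 0 ≤ ρ₀ t ∧ ρ₀ t ≤ 1)
    (f : EuclideanSpace ℝ (Fin n) → EuclideanSpace ℝ (Fin n))
    (hf : LocallyIntegrable f)
    (hdivfree : ∀ φ : EuclideanSpace ℝ (Fin n) → ℝ, ContDiff ℝ (⊤ : ℕ∞) φ → HasCompactSupport φ →
      ∫ y, ∑ i, f y i * fderiv ℝ φ y (EuclideanSpace.single i 1) = 0) :
    ∃ C > (0 : ℝ), ∀ x : EuclideanSpace ℝ (Fin n), x ≠ 0 →
      IntegrableOn (fun y => ‖y‖ * ‖f y‖) {y : EuclideanSpace ℝ (Fin n) | ‖y‖ ≤ ‖x‖ / 2} →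
      ‖∫ y, ρ₀ (‖y‖ / ‖x‖) • f y‖ ≤
        C * ∫ y in {y : EuclideanSpace ℝ (Fin n) | ‖y‖ ≤ ‖x‖ / 2}, ‖y‖ / ‖x‖ * ‖f y‖ := by
  classical
  have hρC : Continuous (deriv ρ₀) := hρsmooth.continuous_deriv (by simp)
  have hd0 : ∀ t : ℝ, t < 1/4 ∨ 1/2 < t → deriv ρ₀ t = 0 := by
    intro t ht
    rcases ht with h | h
    · have he : ρ₀ =ᶠ[nhds t] fun _ => 1 :=
        Filter.eventuallyEq_of_mem (Iio_mem_nhds h) fun s hs => hρ1 s (le_of_lt hs)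
      rw [he.deriv_eq, deriv_const]
    · have he : ρ₀ =ᶠ[nhds t] fun _ => 0 :=
        Filter.eventuallyEq_of_mem (Ioi_mem_nhds h) fun s hs => hρ0 s (le_of_lt hs)
      rw [he.deriv_eq, deriv_const]
  obtain ⟨M, hM⟩ :=
    (isCompact_Icc (a := (0:ℝ)) (b := 1)).exists_bound_of_continuousOn hρC.continuousOn
  have hM0 : 0 ≤ M := le_trans (norm_nonneg _) (hM 0 ⟨le_refl _, by norm_num⟩)
  have hMall : ∀ t : ℝ, 0 ≤ t → |deriv ρ₀ t| ≤ M := by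
    intro t ht
    rcases le_or_gt t 1 with h | h
    · simpa [Real.norm_eq_abs] using hM t ⟨ht, h⟩
    · rw [hd0 t (Or.inr (by linarith))]; simpa using hM0
  have hn0 : (0:ℝ) < n := by
    have : (2:ℝ) ≤ n := by exact_mod_cast hn
    linarith
  refine ⟨n * (M + 1), by positivity, ?_⟩
  intro x hx hint
  have hR : (0:ℝ) < ‖x‖ := norm_pos_iff.mpr hx
  set S : Set (EuclideanSpace ℝ (Fin n)) := {y | ‖y‖ ≤ ‖x‖ / 2} with hS
  have hSball : S = Metric.closedBall 0 (‖x‖/2) := by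
    ext y; simp [hS, mem_closedBall_zero_iff]
  have hSmeas : MeasurableSet S := hSball ▸ measurableSet_closedBall
  have hfS : IntegrableOn f S := hSball ▸ hf.integrableOn_isCompact (isCompact_closedBall _ _)
  have hfmeas : AEStronglyMeasurable f volume := hf.aestronglyMeasurable
  have hfcoord : ∀ j : Fin n, AEStronglyMeasurable (fun y => f y j) volume := fun j =>
    (EuclideanSpace.proj (𝕜 := ℝ) j).continuous.comp_aestronglyMeasurable hfmeas
  -- cutoff is eventually 1 near 0
  have hg_one : ∀ᶠ z in nhds (0 : EuclideanSpace ℝ (Fin n)), ρ₀ (‖z‖/‖x‖) = 1 := by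
    filter_upwards [Metric.ball_mem_nhds (0 : EuclideanSpace ℝ (Fin n))
      (show (0:ℝ) < ‖x‖/4 by positivity)] with z hz
    rw [mem_ball_zero_iff] at hz
    exact hρ1 _ ((div_le_iff₀ hR).2 (by linarith))
  have hg_smooth : ContDiff ℝ (⊤ : ℕ∞) (fun y : EuclideanSpace ℝ (Fin n) => ρ₀ (‖y‖ / ‖x‖)) := by
    rw [contDiff_iff_contDiffAt]
    intro y
    by_cases hy : y = 0
    · subst hy
      exact contDiffAt_const.congr_of_eventuallyEq hg_one
    · exact hρsmooth.contDiffAt.comp y ((contDiffAt_id.norm ℝ hy).div_const ‖x‖)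
  -- indicator bounds integrable
  have hind1 : Integrable (S.indicator fun y => ‖f y‖) := by
    rw [integrable_indicator_iff hSmeas]; exact hfS.norm
  have hind2 : Integrable (S.indicator fun y => M * (‖y‖/‖x‖ * ‖f y‖)) := by
    rw [integrable_indicator_iff hSmeas]
    have h1 : IntegrableOn (fun y => (M/‖x‖) * (‖y‖ * ‖f y‖)) S := hint.const_mul _
    refine h1.congr_fun (fun y _ => ?_) hSmeas
    field_simp
  -- integrability of the main integrand
  have hvmaj : ∀ y : EuclideanSpace ℝ (Fin n),
      ‖ρ₀ (‖y‖/‖x‖) • f y‖ ≤ S.indicator (fun y => ‖f y‖) y := by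
    intro y
    by_cases hyS : y ∈ S
    · rw [Set.indicator_of_mem hyS, norm_smul, Real.norm_eq_abs,
        abs_of_nonneg (hρrange _).1]
      exact mul_le_of_le_one_left (norm_nonneg _) (hρrange _).2
    · rw [Set.indicator_of_notMem hyS]
      have : ¬ ‖y‖ ≤ ‖x‖/2 := hyS
      rw [hρ0 _ ((le_div_iff₀ hR).2 (by linarith [not_le.1 this]))]
      simp
  have hv_int : Integrable (fun y => ρ₀ (‖y‖/‖x‖) • f y) := by
    refine Integrable.mono' hind1
      ((hg_smooth.continuous.aestronglyMeasurable).smul hfmeas)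
      (Filter.Eventually.of_forall hvmaj)
  have hI0 : 0 ≤ ∫ y in S, ‖y‖ / ‖x‖ * ‖f y‖ :=
    setIntegral_nonneg hSmeas fun y _ => by positivity
  have hcoord_le : ∀ (v : EuclideanSpace ℝ (Fin n)) (i : Fin n), |v i| ≤ ‖v‖ := by
    intro v i
    have h := abs_real_inner_le_norm (EuclideanSpace.single i (1:ℝ)) v
    rw [EuclideanSpace.inner_single_left] at h
    simpa using h
  -- key coordinate estimate
  have key : ∀ i : Fin n,
      |∫ y, ρ₀ (‖y‖/‖x‖) * f y i| ≤ M * ∫ y in S, ‖y‖ / ‖x‖ * ‖f y‖ := by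
    intro i
    set φ : EuclideanSpace ℝ (Fin n) → ℝ := fun y => y i * ρ₀ (‖y‖/‖x‖) with hφ
    have hφsm : ContDiff ℝ (⊤ : ℕ∞) φ := by
      have h1 : ContDiff ℝ (⊤ : ℕ∞) (fun y : EuclideanSpace ℝ (Fin n) => y i) :=
        (EuclideanSpace.proj (𝕜 := ℝ) i).contDiff
      exact h1.mul hg_smooth
    have hφsupp : HasCompactSupport φ := by
      apply HasCompactSupport.intro (isCompact_closedBall (0 : EuclideanSpace ℝ (Fin n)) (‖x‖/2))
      intro y hy
      simp only [Metric.mem_closedBall, dist_zero_right, not_le] at hy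
      have : ρ₀ (‖y‖/‖x‖) = 0 := hρ0 _ ((le_div_iff₀ hR).2 (by linarith))
      simp [hφ, this]
    have hφderiv : ∀ y : EuclideanSpace ℝ (Fin n), HasFDerivAt φ
        (ρ₀ (‖y‖/‖x‖) • (EuclideanSpace.proj (𝕜 := ℝ) i)
          + (y i * (deriv ρ₀ (‖y‖/‖x‖) / (‖y‖ * ‖x‖))) • innerSL ℝ y) y := by
      intro y
      by_cases hy : y = 0
      · subst hy
        have h2 : (fun z : EuclideanSpace ℝ (Fin n) => z i) =ᶠ[nhds 0] φ := by
          filter_upwards [hg_one] with z hz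
          simp [hφ, hz]
        have h3 : HasFDerivAt φ (EuclideanSpace.proj (𝕜 := ℝ) i) 0 :=
          (EuclideanSpace.proj (𝕜 := ℝ) i).hasFDerivAt.congr_of_eventuallyEq h2.symm
        have h4 : ρ₀ (‖(0 : EuclideanSpace ℝ (Fin n))‖/‖x‖) = 1 := by
          rw [norm_zero, zero_div]; exact hρ1 0 (by norm_num)
        have h5 : ((0 : EuclideanSpace ℝ (Fin n)) i) = 0 := rfl
        rw [h4, h5]
        simpa using h3
      · have hny : (0:ℝ) < ‖y‖ := norm_pos_iff.mpr hy
        have hρd : HasDerivAt ρ₀ (deriv ρ₀ (‖y‖/‖x‖)) (‖y‖/‖x‖) :=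
          ((hρsmooth.differentiable (by simp)) _).hasDerivAt
        have hcomp : HasDerivAt (fun t : ℝ => ρ₀ (t / ‖x‖))
            (deriv ρ₀ (‖y‖/‖x‖) * (1/‖x‖)) ‖y‖ := by
          have h := hρd.comp ‖y‖ ((hasDerivAt_id ‖y‖).div_const ‖x‖)
          exact h
        have hgd : HasFDerivAt (fun z : EuclideanSpace ℝ (Fin n) => ρ₀ (‖z‖/‖x‖))
            ((deriv ρ₀ (‖y‖/‖x‖) * (1/‖x‖)) • (‖y‖⁻¹ • innerSL ℝ y)) y := by
          have h := hcomp.comp_hasFDerivAt y (hasFDerivAt_norm' hy)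
          exact h
        have hpi : HasFDerivAt (fun z : EuclideanSpace ℝ (Fin n) => z i)
            (EuclideanSpace.proj (𝕜 := ℝ) i) y := (EuclideanSpace.proj (𝕜 := ℝ) i).hasFDerivAt
        have h := hpi.mul hgd
        refine h.congr_fderiv ?_
        ext v
        simp only [ContinuousLinearMap.add_apply, ContinuousLinearMap.smul_apply,
          smul_eq_mul]
        rw [add_comm]
        congr 1
        field_simp
    have hsum : ∀ y : EuclideanSpace ℝ (Fin n),
        (∑ j, f y j * fderiv ℝ φ y (EuclideanSpace.single j 1))
        = ρ₀ (‖y‖/‖x‖) * f y i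
          + (y i * (deriv ρ₀ (‖y‖/‖x‖) / (‖y‖ * ‖x‖))) * ∑ j, f y j * y j := by
      intro y
      have happ : ∀ j : Fin n,
          (ρ₀ (‖y‖/‖x‖) • (EuclideanSpace.proj (𝕜 := ℝ) i)
            + (y i * (deriv ρ₀ (‖y‖/‖x‖) / (‖y‖ * ‖x‖))) • innerSL ℝ y)
            (EuclideanSpace.single j 1)
          = ρ₀ (‖y‖/‖x‖) * (if i = j then 1 else 0)
            + (y i * (deriv ρ₀ (‖y‖/‖x‖) / (‖y‖ * ‖x‖))) * y j := by
        intro j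
        simp only [ContinuousLinearMap.add_apply, ContinuousLinearMap.smul_apply,
          smul_eq_mul]
        congr 1
        · congr 1
          rw [show (EuclideanSpace.proj (𝕜 := ℝ) i) (EuclideanSpace.single j (1:ℝ))
              = (EuclideanSpace.single j (1:ℝ)) i from rfl, EuclideanSpace.single_apply]
        · congr 1
          have h5 : (innerSL ℝ y) (EuclideanSpace.single j (1:ℝ)) = y j := by
            simp [innerSL_apply_apply, EuclideanSpace.inner_single_right]
          rw [h5]
      calc (∑ j, f y j * fderiv ℝ φ y (EuclideanSpace.single j 1))
          = ∑ j, (f y j * (ρ₀ (‖y‖/‖x‖) * (if i = j then 1 else 0))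
              + (y i * (deriv ρ₀ (‖y‖/‖x‖) / (‖y‖ * ‖x‖))) * (f y j * y j)) := by
            refine Finset.sum_congr rfl fun j _ => ?_
            rw [(hφderiv y).fderiv, happ j]
            ring
        _ = ρ₀ (‖y‖/‖x‖) * f y i
              + (y i * (deriv ρ₀ (‖y‖/‖x‖) / (‖y‖ * ‖x‖))) * ∑ j, f y j * y j := by
            rw [Finset.sum_add_distrib, ← Finset.mul_sum]
            congr 1
            simp only [mul_ite, mul_one, mul_zero]
            rw [Finset.sum_ite_eq Finset.univ i (fun j => f y j * ρ₀ (‖y‖/‖x‖))]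
            simp [mul_comm]
    -- integrability of G
    have hGmeas : AEStronglyMeasurable
        (fun y : EuclideanSpace ℝ (Fin n) =>
          (y i * (deriv ρ₀ (‖y‖/‖x‖) / (‖y‖ * ‖x‖))) * ∑ j, f y j * y j) volume := by
      have h1 : Measurable (fun y : EuclideanSpace ℝ (Fin n) =>
          y i * (deriv ρ₀ (‖y‖/‖x‖) / (‖y‖ * ‖x‖))) := by
        apply Measurable.mul
        · exact (EuclideanSpace.proj (𝕜 := ℝ) i).continuous.measurable
        · exact (hρC.comp ((continuous_norm).div_const ‖x‖)).measurable.div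
            ((continuous_norm.mul continuous_const).measurable)
      have h2 : AEStronglyMeasurable
          (fun y : EuclideanSpace ℝ (Fin n) => ∑ j, f y j * y j) volume := by
        refine Finset.aestronglyMeasurable_fun_sum _ fun j _ => ?_
        exact (hfcoord j).mul
          ((EuclideanSpace.proj (𝕜 := ℝ) j).continuous.aestronglyMeasurable)
      exact h1.aestronglyMeasurable.mul h2
    have hsum_le : ∀ y : EuclideanSpace ℝ (Fin n), |∑ j, f y j * y j| ≤ ‖f y‖ * ‖y‖ := by
      intro y
      have h := abs_real_inner_le_norm (f y) y
      rw [PiLp.inner_apply] at h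
      simpa [RCLike.inner_apply, conj_trivial, mul_comm] using h
    have hGbound : ∀ y : EuclideanSpace ℝ (Fin n),
        |(y i * (deriv ρ₀ (‖y‖/‖x‖) / (‖y‖ * ‖x‖))) * ∑ j, f y j * y j|
          ≤ S.indicator (fun y => M * (‖y‖/‖x‖ * ‖f y‖)) y := by
      intro y
      by_cases hyS : y ∈ S
      · rw [Set.indicator_of_mem hyS]
        by_cases hy : y = 0
        · subst hy
          simp
        · have hny : (0:ℝ) < ‖y‖ := norm_pos_iff.mpr hy
          have e1 : |(y i * (deriv ρ₀ (‖y‖/‖x‖) / (‖y‖ * ‖x‖))) * ∑ j, f y j * y j|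
              = |y i| * (|deriv ρ₀ (‖y‖/‖x‖)| / (‖y‖ * ‖x‖)) * |∑ j, f y j * y j| := by
            rw [abs_mul, abs_mul, abs_div, abs_of_pos (by positivity : (0:ℝ) < ‖y‖ * ‖x‖)]
          rw [e1]
          have hd : |deriv ρ₀ (‖y‖/‖x‖)| ≤ M := hMall _ (by positivity)
          calc |y i| * (|deriv ρ₀ (‖y‖/‖x‖)| / (‖y‖ * ‖x‖)) * |∑ j, f y j * y j|
              ≤ ‖y‖ * (M / (‖y‖ * ‖x‖)) * (‖f y‖ * ‖y‖) := by
                gcongr <;>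
                  first
                    | exact abs_nonneg _
                    | exact hcoord_le y i
                    | exact hd
                    | exact hsum_le y
            _ = M * (‖y‖/‖x‖ * ‖f y‖) := by field_simp
      · rw [Set.indicator_of_notMem hyS]
        have h1 : ¬ ‖y‖ ≤ ‖x‖/2 := hyS
        have h2 : deriv ρ₀ (‖y‖/‖x‖) = 0 :=
          hd0 _ (Or.inr ((lt_div_iff₀ hR).2 (by linarith [not_le.1 h1])))
        rw [h2]
        simp
    have hGint : Integrable (fun y : EuclideanSpace ℝ (Fin n) =>
        (y i * (deriv ρ₀ (‖y‖/‖x‖) / (‖y‖ * ‖x‖))) * ∑ j, f y j * y j) := by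
      refine Integrable.mono' hind2 hGmeas (Filter.Eventually.of_forall fun y => ?_)
      simpa only [Real.norm_eq_abs] using hGbound y
    have hρfi_int : Integrable (fun y => ρ₀ (‖y‖/‖x‖) * f y i) := by
      refine Integrable.mono' hind1
        ((hg_smooth.continuous.aestronglyMeasurable).mul (hfcoord i))
        (Filter.Eventually.of_forall fun y => ?_)
      calc ‖ρ₀ (‖y‖/‖x‖) * f y i‖ ≤ ‖ρ₀ (‖y‖/‖x‖) • f y‖ := by
            rw [norm_smul, Real.norm_eq_abs, Real.norm_eq_abs, abs_mul]
            gcongr <;> first | exact abs_nonneg _ | exact hcoord_le (f y) i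
        _ ≤ S.indicator (fun y => ‖f y‖) y := hvmaj y
    have h0' : (∫ y, (ρ₀ (‖y‖/‖x‖) * f y i
        + (y i * (deriv ρ₀ (‖y‖/‖x‖) / (‖y‖ * ‖x‖))) * ∑ j, f y j * y j)) = 0 := by
      rw [← hdivfree φ hφsm hφsupp]
      exact integral_congr_ae (Filter.Eventually.of_forall fun y => (hsum y).symm)
    rw [integral_add hρfi_int hGint] at h0'
    have heq2 : ∫ y, ρ₀ (‖y‖/‖x‖) * f y i
        = - ∫ y, (y i * (deriv ρ₀ (‖y‖/‖x‖) / (‖y‖ * ‖x‖))) * ∑ j, f y j * y j := by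
      linarith
    rw [heq2, abs_neg]
    calc |∫ y, (y i * (deriv ρ₀ (‖y‖/‖x‖) / (‖y‖ * ‖x‖))) * ∑ j, f y j * y j|
        ≤ ∫ y, |(y i * (deriv ρ₀ (‖y‖/‖x‖) / (‖y‖ * ‖x‖))) * ∑ j, f y j * y j| := by
          simpa only [Real.norm_eq_abs] using
            norm_integral_le_integral_norm (μ := volume)
              (f := fun y : EuclideanSpace ℝ (Fin n) =>
                (y i * (deriv ρ₀ (‖y‖/‖x‖) / (‖y‖ * ‖x‖))) * ∑ j, f y j * y j)
      _ ≤ ∫ y, S.indicator (fun y => M * (‖y‖/‖x‖ * ‖f y‖)) y :=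
          integral_mono hGint.abs hind2 hGbound
      _ = ∫ y in S, M * (‖y‖/‖x‖ * ‖f y‖) := integral_indicator hSmeas
      _ = M * ∫ y in S, ‖y‖/‖x‖ * ‖f y‖ := by rw [integral_const_mul]
  -- assemble
  have hvi : ∀ i : Fin n, (∫ y, ρ₀ (‖y‖/‖x‖) • f y) i = ∫ y, ρ₀ (‖y‖/‖x‖) * f y i := by
    intro i
    have h := (EuclideanSpace.proj (𝕜 := ℝ) i).integral_comp_comm hv_int
    simpa using h.symm
  have hnorm : ‖∫ y, ρ₀ (‖y‖/‖x‖) • f y‖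
      ≤ ∑ i : Fin n, |(∫ y, ρ₀ (‖y‖/‖x‖) • f y) i| := by
    set v := ∫ y, ρ₀ (‖y‖/‖x‖) • f y with hv
    rw [EuclideanSpace.norm_eq]
    have h1 : ∑ i : Fin n, ‖v i‖ ^ 2 ≤ (∑ i : Fin n, |v i|) ^ 2 := by
      have := Finset.sum_sq_le_sq_sum_of_nonneg
        (s := Finset.univ) (f := fun i : Fin n => |v i|) (fun i _ => abs_nonneg _)
      simpa [Real.norm_eq_abs] using this
    calc Real.sqrt (∑ i : Fin n, ‖v i‖ ^ 2) ≤ Real.sqrt ((∑ i : Fin n, |v i|) ^ 2) :=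
          Real.sqrt_le_sqrt h1
      _ = ∑ i : Fin n, |v i| := Real.sqrt_sq (Finset.sum_nonneg fun i _ => abs_nonneg _)
  calc ‖∫ y, ρ₀ (‖y‖/‖x‖) • f y‖ ≤ ∑ i : Fin n, |(∫ y, ρ₀ (‖y‖/‖x‖) • f y) i| := hnorm
    _ ≤ ∑ _i : Fin n, M * ∫ y in S, ‖y‖/‖x‖ * ‖f y‖ := by
        refine Finset.sum_le_sum fun i _ => ?_
        rw [hvi i]; exact key i
    _ = n * (M * ∫ y in S, ‖y‖/‖x‖ * ‖f y‖) := by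
        rw [Finset.sum_const, Finset.card_univ, Fintype.card_fin, nsmul_eq_mul]
    _ ≤ n * (M + 1) * ∫ y in S, ‖y‖/‖x‖ * ‖f y‖ := by
        rw [mul_assoc]
        refine mul_le_mul_of_nonneg_left ?_ (le_of_lt hn0)
        exact mul_le_mul_of_nonneg_right (by linarith) hI0
end

section
/- Let $n\ge 2$, $0<\lambda<n$, $1\le q<\infty$, $\beta<n/q$, $\alpha<1$, $\alpha+\beta>0$, $1/q=1+(\alpha+\beta-\lambda)/n$. Then $\int_{|x|\le 4|y|}\frac{|x|^{-\beta q}}{|x-y|^{(n-\lambda)q}}\,dx \le C\,|y|^{\alpha q}$ for all $y\neq 0$, with $C$ independent of $y$. -/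
/-!
The kernel `‖x‖ ^ (-a) / ‖x - y‖ ^ b` is homogeneous of degree `-(a + b)`, and a Haar measure
scales by `R ^ d` under `x ↦ R • x`, so the integral over the ball of radius `r ‖y‖` equals
`‖y‖ ^ (d - a - b)` times the same integral with `y` replaced by the unit vector `y / ‖y‖`.
That unit-scale integral is bounded uniformly in the direction: where `‖u‖ ≤ 1/2` the factor
`‖u - e‖ ^ (-b)` is at most `2 ^ b`, and elsewhere the weight `‖u‖ ^ (-a)` is bounded, leaving a
translate of `‖v‖ ^ (-b)`. Both `‖u‖ ^ (-a)` and `‖v‖ ^ (-b)` are locally integrable since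
`a, b < d`. For the theorem, `d = n`, `a = β q`, `b = (n - λ) q`, and the scaling relation gives
`n - β q - (n - λ) q = α q`.
-/

open MeasureTheory Metric Set Module

section Kernel

variable {E : Type*} [NormedAddCommGroup E]

noncomputable def weightedKernel (a b : ℝ) (y x : E) : ℝ := ‖x‖ ^ (-a) / ‖x - y‖ ^ b

theorem weightedKernel_smul [NormedSpace ℝ E] (a b : ℝ) {R : ℝ} (hR : 0 < R) (y x : E) :
    weightedKernel a b (R • y) (R • x) = R ^ (-a - b) * weightedKernel a b y x := by
  simp only [weightedKernel, ← smul_sub, norm_smul, Real.norm_of_nonneg hR.le,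
    Real.mul_rpow hR.le (norm_nonneg _), Real.rpow_sub hR, Real.rpow_neg hR.le]
  ring

theorem weightedKernel_le {a b r : ℝ} (hb : 0 ≤ b) {e u : E} (he : ‖e‖ = 1) (hu : ‖u‖ ≤ r) :
    weightedKernel a b e u ≤ 2 ^ b * ‖u‖ ^ (-a) + max (2 ^ a) (r ^ (-a)) * ‖u - e‖ ^ (-b) := by
  unfold weightedKernel
  rcases le_or_gt ‖u‖ 2⁻¹ with hu_small | hu_large
  · have hdist : 2⁻¹ ≤ ‖u - e‖ := by linarith [norm_sub_norm_le e u, norm_sub_rev u e]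
    calc ‖u‖ ^ (-a) / ‖u - e‖ ^ b ≤ ‖u‖ ^ (-a) / 2⁻¹ ^ b := by gcongr
      _ = 2 ^ b * ‖u‖ ^ (-a) := by rw [Real.inv_rpow zero_le_two, div_inv_eq_mul, mul_comm]
      _ ≤ _ := le_add_of_nonneg_right (by positivity)
  · have hweight : ‖u‖ ^ (-a) ≤ max (2 ^ a) (r ^ (-a)) := by
      rcases le_total 0 a with ha | ha
      · calc ‖u‖ ^ (-a) ≤ 2⁻¹ ^ (-a) :=
            Real.rpow_le_rpow_of_nonpos (by norm_num) hu_large.le (by linarith)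
          _ = 2 ^ a := by rw [Real.inv_rpow zero_le_two, Real.rpow_neg zero_le_two, inv_inv]
          _ ≤ _ := le_max_left _ _
      · exact (Real.rpow_le_rpow (norm_nonneg u) hu (by linarith)).trans (le_max_right _ _)
    calc ‖u‖ ^ (-a) / ‖u - e‖ ^ b = ‖u‖ ^ (-a) * ‖u - e‖ ^ (-b) := by
          rw [Real.rpow_neg (norm_nonneg (u - e)), div_eq_mul_inv]
      _ ≤ max (2 ^ a) (r ^ (-a)) * ‖u - e‖ ^ (-b) := by gcongr
      _ ≤ _ := le_add_of_nonneg_left (by positivity)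

end Kernel

section RightInvariant

variable {G : Type*} [NormedAddCommGroup G] [MeasurableSpace G] [BorelSpace G]
  (μ : Measure G) [μ.IsAddRightInvariant]

theorem setLIntegral_closedBall_comp_sub_le (g : G → ENNReal) {e : G} {s : ℝ}
    (he : ‖e‖ ≤ s) (r : ℝ) :
    ∫⁻ u in closedBall 0 r, g (u - e) ∂μ ≤ ∫⁻ v in closedBall 0 (r + s), g v ∂μ := by
  calc ∫⁻ u in closedBall 0 r, g (u - e) ∂μ
      ≤ ∫⁻ u in (· - e) ⁻¹' closedBall 0 (r + s), g (u - e) ∂μ := by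
        refine lintegral_mono_set fun u hu ↦ ?_
        simp only [mem_preimage, mem_closedBall_zero_iff] at hu ⊢
        linarith [norm_sub_le u e]
    _ = ∫⁻ v in closedBall 0 (r + s), g v ∂μ :=
        (measurePreserving_sub_right μ e).setLIntegral_comp_preimage_emb
          (measurableEmbedding_subRight e) g _

theorem lintegral_weightedKernel_unit_le {a b : ℝ} (hb : 0 ≤ b) {e : G} (he : ‖e‖ = 1) (r : ℝ) :
    ∫⁻ u in closedBall 0 r, ENNReal.ofReal (weightedKernel a b e u) ∂μ ≤
      ENNReal.ofReal (2 ^ b) * ∫⁻ u in closedBall 0 r, ENNReal.ofReal (‖u‖ ^ (-a)) ∂μ +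
        ENNReal.ofReal (max (2 ^ a) (r ^ (-a))) *
          ∫⁻ v in closedBall 0 (r + 1), ENNReal.ofReal (‖v‖ ^ (-b)) ∂μ := by
  set c := max (2 ^ a) (r ^ (-a))
  have hc : 0 ≤ c := le_max_of_le_left (by positivity)
  calc ∫⁻ u in closedBall 0 r, ENNReal.ofReal (weightedKernel a b e u) ∂μ
      ≤ ∫⁻ u in closedBall 0 r, (ENNReal.ofReal (2 ^ b) * ENNReal.ofReal (‖u‖ ^ (-a)) +
          ENNReal.ofReal c * ENNReal.ofReal (‖u - e‖ ^ (-b))) ∂μ := by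
        refine setLIntegral_mono' measurableSet_closedBall fun u hu ↦ ?_
        rw [← ENNReal.ofReal_mul (by positivity), ← ENNReal.ofReal_mul hc,
          ← ENNReal.ofReal_add (by positivity) (by positivity)]
        exact ENNReal.ofReal_le_ofReal (weightedKernel_le hb he (mem_closedBall_zero_iff.mp hu))
    _ = ENNReal.ofReal (2 ^ b) * ∫⁻ u in closedBall 0 r, ENNReal.ofReal (‖u‖ ^ (-a)) ∂μ +
          ENNReal.ofReal c * ∫⁻ u in closedBall 0 r, ENNReal.ofReal (‖u - e‖ ^ (-b)) ∂μ := by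
        rw [lintegral_add_left (by fun_prop), lintegral_const_mul _ (by fun_prop),
          lintegral_const_mul _ (by fun_prop)]
    _ ≤ _ := by
        gcongr _ + _ * ?_
        exact setLIntegral_closedBall_comp_sub_le μ (fun v ↦ ENNReal.ofReal (‖v‖ ^ (-b))) he.le r

end RightInvariant

section AddHaar

variable {E : Type*} [NormedAddCommGroup E] [NormedSpace ℝ E] [FiniteDimensional ℝ E]
  [MeasurableSpace E] [BorelSpace E] (μ : Measure E) [μ.IsAddHaarMeasure]

theorem lintegral_closedBall_norm_rpow_neg_lt_top (hd : 1 ≤ finrank ℝ E) {a : ℝ}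
    (ha : a < finrank ℝ E) (r : ℝ) :
    ∫⁻ x in closedBall (0 : E) r, ENNReal.ofReal (‖x‖ ^ (-a)) ∂μ < ⊤ := by
  have hloc : LocallyIntegrable (fun x : E ↦ ‖x‖ ^ (-a)) μ :=
    locallyIntegrable_of_norm_le_rpow (C := 1) hd ha
      (.of_forall fun x ↦ by simp [abs_of_nonneg (Real.rpow_nonneg (norm_nonneg x) _)])
      (by fun_prop : Measurable fun x : E ↦ ‖x‖ ^ (-a)).aestronglyMeasurable
  exact (hloc.integrableOn_isCompact (isCompact_closedBall 0 r)).lintegral_lt_top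

theorem setLIntegral_closedBall_mul_eq (f : E → ENNReal) {R : ℝ} (hR : 0 < R) (r : ℝ) :
    ∫⁻ x in closedBall 0 (r * R), f x ∂μ =
      ENNReal.ofReal (R ^ finrank ℝ E) * ∫⁻ u in closedBall 0 r, f (R • u) ∂μ := by
  have hemb : MeasurableEmbedding (R • · : E → E) :=
    (Homeomorph.smulOfNeZero R hR.ne').measurableEmbedding
  have hpre : (R • · : E → E) ⁻¹' closedBall 0 (r * R) = closedBall 0 r := by
    ext u
    simp [norm_smul, abs_of_pos hR, mul_comm R, mul_le_mul_iff_left₀ hR]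
  have hRd : 0 < R ^ finrank ℝ E := pow_pos hR _
  rw [← hpre, ← hemb.lintegral_map, ← hemb.restrict_map, Measure.map_addHaar_smul μ hR.ne',
    Measure.restrict_smul, lintegral_smul_measure, smul_eq_mul, ← mul_assoc,
    abs_of_pos (inv_pos.mpr hRd), ← ENNReal.ofReal_mul hRd.le, mul_inv_cancel₀ hRd.ne',
    ENNReal.ofReal_one, one_mul]

theorem exists_setLIntegral_weightedKernel_le (hd : 1 ≤ finrank ℝ E) {a b : ℝ}
    (ha : a < finrank ℝ E) (hb₀ : 0 ≤ b) (hbd : b < finrank ℝ E) (r : ℝ) :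
    ∃ C > (0 : ℝ), ∀ y : E, y ≠ 0 →
      ∫⁻ x in closedBall 0 (r * ‖y‖), ENNReal.ofReal (weightedKernel a b y x) ∂μ ≤
        ENNReal.ofReal (C * ‖y‖ ^ ((finrank ℝ E : ℝ) - a - b)) := by
  set M := ENNReal.ofReal (2 ^ b) * ∫⁻ u in closedBall 0 r, ENNReal.ofReal (‖u‖ ^ (-a)) ∂μ +
    ENNReal.ofReal (max (2 ^ a) (r ^ (-a))) *
      ∫⁻ v in closedBall 0 (r + 1), ENNReal.ofReal (‖v‖ ^ (-b)) ∂μ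
  have hM : M ≤ ENNReal.ofReal (M.toReal + 1) := by
    have hM_ne_top : M ≠ ⊤ := by
      have := lintegral_closedBall_norm_rpow_neg_lt_top μ hd ha r
      have := lintegral_closedBall_norm_rpow_neg_lt_top μ hd hbd (r + 1)
      finiteness
    calc M = ENNReal.ofReal M.toReal := (ENNReal.ofReal_toReal hM_ne_top).symm
      _ ≤ _ := ENNReal.ofReal_le_ofReal (by linarith)
  refine ⟨M.toReal + 1, by positivity, fun y hy ↦ ?_⟩
  set R := ‖y‖
  have hR : 0 < R := norm_pos_iff.mpr hy
  have he : ‖R⁻¹ • y‖ = 1 := norm_smul_inv_norm hy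
  have hy_eq : R • R⁻¹ • y = y := smul_inv_smul₀ hR.ne' y
  calc ∫⁻ x in closedBall 0 (r * R), ENNReal.ofReal (weightedKernel a b y x) ∂μ
      = ENNReal.ofReal (R ^ finrank ℝ E) *
          ∫⁻ u in closedBall 0 r, ENNReal.ofReal (weightedKernel a b y (R • u)) ∂μ :=
        setLIntegral_closedBall_mul_eq μ _ hR r
    _ = ENNReal.ofReal (R ^ ((finrank ℝ E : ℝ) - a - b)) *
          ∫⁻ u in closedBall 0 r, ENNReal.ofReal (weightedKernel a b (R⁻¹ • y) u) ∂μ := by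
        nth_rw 1 [← hy_eq]
        simp_rw [weightedKernel_smul a b hR, ENNReal.ofReal_mul (Real.rpow_nonneg hR.le _)]
        rw [lintegral_const_mul' _ _ ENNReal.ofReal_ne_top, ← mul_assoc,
          ← ENNReal.ofReal_mul (pow_nonneg hR.le _), ← Real.rpow_natCast, ← Real.rpow_add hR]
        ring_nf
    _ ≤ ENNReal.ofReal (R ^ ((finrank ℝ E : ℝ) - a - b)) * ENNReal.ofReal (M.toReal + 1) := by
        gcongr
        exact (lintegral_weightedKernel_unit_le μ hb₀ he r).trans hM
    _ = ENNReal.ofReal ((M.toReal + 1) * R ^ ((finrank ℝ E : ℝ) - a - b)) := by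
        rw [← ENNReal.ofReal_mul (Real.rpow_nonneg hR.le _), mul_comm]

end AddHaar

theorem stmt13_general {n : ℕ} (lam α β q : ℝ) (hl0 : 0 < lam) (hln : lam < n)
    (hq1 : 1 ≤ q) (hβ : β < n / q) (hαβ : 0 < α + β)
    (hscal : 1 / q = 1 + (α + β - lam) / n) :
    ∃ C > (0 : ℝ), ∀ y : EuclideanSpace ℝ (Fin n), y ≠ 0 →
      ∫⁻ x in {x : EuclideanSpace ℝ (Fin n) | ‖x‖ ≤ 4 * ‖y‖},
          ENNReal.ofReal (‖x‖ ^ (-(β * q)) / ‖x - y‖ ^ (((n : ℝ) - lam) * q)) ≤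
        ENNReal.ofReal (C * ‖y‖ ^ (α * q)) := by
  have hq : 0 < q := by linarith
  have hn₀ : (0 : ℝ) < n := hl0.trans hln
  have hd : 1 ≤ finrank ℝ (EuclideanSpace ℝ (Fin n)) := by
    rw [finrank_euclideanSpace_fin]; exact_mod_cast hn₀
  have hscal' : (n : ℝ) = n * q + (α + β - lam) * q := by
    field_simp at hscal; linarith
  have ha : β * q < finrank ℝ (EuclideanSpace ℝ (Fin n)) := by
    rw [finrank_euclideanSpace_fin]; exact (lt_div_iff₀ hq).mp hβ
  have hb : ((n : ℝ) - lam) * q < finrank ℝ (EuclideanSpace ℝ (Fin n)) := by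
    rw [finrank_euclideanSpace_fin]; linarith [mul_pos hαβ hq]
  obtain ⟨C, hC, hbound⟩ := exists_setLIntegral_weightedKernel_le volume hd ha
    (mul_nonneg (by linarith) hq.le) hb 4
  have hexp : (finrank ℝ (EuclideanSpace ℝ (Fin n)) : ℝ) - β * q - (n - lam) * q = α * q := by
    rw [finrank_euclideanSpace_fin]; linarith
  refine ⟨C, hC, fun y hy ↦ ?_⟩
  have hball : {x : EuclideanSpace ℝ (Fin n) | ‖x‖ ≤ 4 * ‖y‖} = closedBall 0 (4 * ‖y‖) := by
    ext; simp
  simpa only [hball, hexp, weightedKernel] using hbound y hy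

theorem stmt13 {n : ℕ} (hn : 2 ≤ n) (lam α β q : ℝ) (hl0 : 0 < lam) (hln : lam < n)
    (hq1 : 1 ≤ q) (hβ : β < n / q) (hα : α < 1) (hαβ : 0 < α + β)
    (hscal : 1 / q = 1 + (α + β - lam) / n) :
    ∃ C > (0 : ℝ), ∀ y : EuclideanSpace ℝ (Fin n), y ≠ 0 →
      ∫⁻ x in {x : EuclideanSpace ℝ (Fin n) | ‖x‖ ≤ 4 * ‖y‖},
          ENNReal.ofReal (‖x‖ ^ (-(β * q)) / ‖x - y‖ ^ (((n : ℝ) - lam) * q)) ≤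
        ENNReal.ofReal (C * ‖y‖ ^ (α * q)) :=
  stmt13_general lam α β q hl0 hln hq1 hβ hαβ hscal
end

section
/- Let $n\ge 2$, $\beta = 1 - n(1-1/q)$ with $1\le q < n/(n-1)$. Then there is a constant $C$ such that for every $u\in C_c^\infty(\mathbb{R}^n)$, $\left\|\,|x|^{-\beta}u\,\right\|_{L^q(\mathbb{R}^n)} \le C\,\|\nabla u\|_{L^1(\mathbb{R}^n)}$. In particular (q=1, $\beta=1$), the Hardy inequality $\left\|\frac{u}{|x|}\right\|_{L^1}\le C\|\nabla u\|_{L^1}$ holds. -/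
open MeasureTheory Set
noncomputable section

lemma lintegral_comp_smul' {E : Type*} [NormedAddCommGroup E] [NormedSpace ℝ E]
    [MeasurableSpace E] [BorelSpace E] [FiniteDimensional ℝ E] (μ : Measure E)
    [μ.IsAddHaarMeasure] {f : E → ENNReal} (hf : Measurable f) {R : ℝ} (hR : R ≠ 0) :
    ∫⁻ x, f (R • x) ∂μ = ENNReal.ofReal |(R ^ Module.finrank ℝ E)⁻¹| * ∫⁻ x, f x ∂μ := by
  have h1 : Measurable fun x : E => R • x := measurable_id.const_smul R
  have := lintegral_map (μ := μ) hf h1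
  rw [Measure.map_addHaar_smul μ hR, lintegral_smul_measure] at this
  exact this.symm

lemma lint_rpow {n : ℕ} (hn : 2 ≤ n) :
    ∫⁻ t in Ioi (1:ℝ), ENNReal.ofReal (t ^ (-(n:ℝ))) = ENNReal.ofReal (1 / ((n:ℝ) - 1)) := by
  have hn' : (2:ℝ) ≤ n := by exact_mod_cast hn
  have hlt : -(n:ℝ) < -1 := by linarith
  rw [← ofReal_integral_eq_lintegral_ofReal (integrableOn_Ioi_rpow_of_lt hlt one_pos)
      ((ae_restrict_mem measurableSet_Ioi).mono fun t ht => Real.rpow_nonneg (by linarith [ht.out] : (0:ℝ) ≤ t) _)]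
  rw [integral_Ioi_rpow_of_lt hlt one_pos]
  congr 1
  rw [Real.one_rpow]
  rw [div_eq_div_iff (by linarith) (by linarith)]
  ring

lemma hardy {n : ℕ} (hn : 2 ≤ n) (u : EuclideanSpace ℝ (Fin n) → ℝ)
    (hu : ContDiff ℝ 1 u) (h2u : HasCompactSupport u) :
    ∫⁻ x, ENNReal.ofReal (|u x| / ‖x‖) ≤
      ENNReal.ofReal (1 / ((n:ℝ) - 1)) * ∫⁻ x, (‖fderiv ℝ u x‖₊ : ENNReal) := by
  have hDu_cont : Continuous (fderiv ℝ u) := hu.continuous_fderiv one_ne_zero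
  obtain ⟨R, hR0, hR⟩ := h2u.exists_pos_le_norm
  have key : ∀ x : EuclideanSpace ℝ (Fin n), x ≠ 0 →
      ENNReal.ofReal (|u x| / ‖x‖) ≤ ∫⁻ t in Ioi (1:ℝ), (‖fderiv ℝ u (t • x)‖₊ : ENNReal) := by
    intro x hx
    have hxn : 0 < ‖x‖ := norm_pos_iff.mpr hx
    set T : ℝ := max 2 (R / ‖x‖) with hT
    have hT1 : (1:ℝ) ≤ T := le_trans one_le_two (le_max_left _ _)
    have hT0 : 0 < T := lt_of_lt_of_le one_pos hT1
    have huT : u (T • x) = 0 := by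
      apply hR
      rw [norm_smul, Real.norm_eq_abs, abs_of_pos hT0]
      calc R = (R / ‖x‖) * ‖x‖ := by field_simp
        _ ≤ T * ‖x‖ := by gcongr; exact le_max_right _ _
    have hderiv : ∀ t : ℝ, HasDerivAt (fun s => u (s • x)) (fderiv ℝ u (t • x) x) t := by
      intro t
      have h1 : HasDerivAt (fun s : ℝ => s • x) x t := by
        simpa using (hasDerivAt_id t).smul_const x
      exact ((hu.differentiable one_ne_zero (t • x)).hasFDerivAt.comp_hasDerivAt t h1)
    have hcont1 : Continuous fun t : ℝ => fderiv ℝ u (t • x) := by fun_prop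
    have hcont : Continuous fun t : ℝ => fderiv ℝ u (t • x) x := by fun_prop
    have hftc := intervalIntegral.integral_eq_sub_of_hasDerivAt (fun t _ => hderiv t)
      (hcont.intervalIntegrable 1 T)
    have hux : |u x| ≤ ∫ t in (1:ℝ)..T, ‖fderiv ℝ u (t • x)‖ * ‖x‖ := by
      have h0 : |u x| = ‖∫ t in (1:ℝ)..T, fderiv ℝ u (t • x) x‖ := by
        rw [hftc, huT, one_smul, zero_sub, norm_neg, Real.norm_eq_abs]
      rw [h0]
      refine (intervalIntegral.norm_integral_le_integral_norm hT1).trans ?_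
      refine intervalIntegral.integral_mono_on hT1 (hcont.norm.intervalIntegrable 1 T)
        ((hcont1.norm.mul continuous_const).intervalIntegrable 1 T) fun t ht => ?_
      exact (fderiv ℝ u (t • x)).le_opNorm x
    have hdiv : |u x| / ‖x‖ ≤ ∫ t in (1:ℝ)..T, ‖fderiv ℝ u (t • x)‖ := by
      rw [div_le_iff₀ hxn]
      refine hux.trans (le_of_eq ?_)
      rw [← intervalIntegral.integral_mul_const]
    calc ENNReal.ofReal (|u x| / ‖x‖)
        ≤ ENNReal.ofReal (∫ t in (1:ℝ)..T, ‖fderiv ℝ u (t • x)‖) :=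
          ENNReal.ofReal_le_ofReal hdiv
      _ = ∫⁻ t in Ioc (1:ℝ) T, ENNReal.ofReal ‖fderiv ℝ u (t • x)‖ := by
          rw [intervalIntegral.integral_of_le hT1,
            ofReal_integral_eq_lintegral_ofReal (hcont1.norm.integrableOn_Ioc)
              (Filter.Eventually.of_forall fun t => norm_nonneg _)]
      _ ≤ ∫⁻ t in Ioi (1:ℝ), ENNReal.ofReal ‖fderiv ℝ u (t • x)‖ :=
          lintegral_mono_set Ioc_subset_Ioi_self
      _ = _ := by simp_rw [ofReal_norm, enorm_eq_nnnorm]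
  have hmeas : Measurable fun x : EuclideanSpace ℝ (Fin n) => (‖fderiv ℝ u x‖₊ : ENNReal) :=
    hDu_cont.measurable.nnnorm.coe_nnreal_ennreal
  calc ∫⁻ x, ENNReal.ofReal (|u x| / ‖x‖)
      ≤ ∫⁻ x, ∫⁻ t in Ioi (1:ℝ), (‖fderiv ℝ u (t • x)‖₊ : ENNReal) := by
        refine lintegral_mono_ae ?_
        have h0 : ∀ᵐ x : EuclideanSpace ℝ (Fin n), x ≠ 0 := by
          haveI : NeZero n := ⟨by omega⟩
          haveI : Nontrivial (EuclideanSpace ℝ (Fin n)) := inferInstance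
          have h1 := measure_singleton (μ := (volume : Measure (EuclideanSpace ℝ (Fin n)))) 0
          rw [ae_iff]
          convert h1 using 2
          ext y; simp
        exact h0.mono key
    _ = ∫⁻ t in Ioi (1:ℝ), ∫⁻ x, (‖fderiv ℝ u (t • x)‖₊ : ENNReal) := by
        refine lintegral_lintegral_swap ?_
        apply Measurable.aemeasurable
        have : Continuous fun p : (EuclideanSpace ℝ (Fin n)) × ℝ => fderiv ℝ u (p.2 • p.1) :=
          hDu_cont.comp (continuous_snd.smul continuous_fst)
        exact this.measurable.nnnorm.coe_nnreal_ennreal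
    _ = ∫⁻ t in Ioi (1:ℝ), ENNReal.ofReal (t ^ (-(n:ℝ))) * ∫⁻ x, (‖fderiv ℝ u x‖₊ : ENNReal) := by
        refine setLIntegral_congr_fun measurableSet_Ioi (fun t ht => ?_)
        rw [lintegral_comp_smul' volume hmeas (by linarith [ht.out] : t ≠ 0)]
        congr 2
        rw [finrank_euclideanSpace, Fintype.card_fin]
        have ht0 : (0:ℝ) < t := lt_trans one_pos ht.out
        rw [abs_of_nonneg (inv_nonneg.2 (pow_nonneg ht0.le _)),
          Real.rpow_neg ht0.le, Real.rpow_natCast]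
    _ = (∫⁻ t in Ioi (1:ℝ), ENNReal.ofReal (t ^ (-(n:ℝ)))) * ∫⁻ x, (‖fderiv ℝ u x‖₊ : ENNReal) := by
        rw [lintegral_mul_const]
        exact (ENNReal.measurable_ofReal.comp (measurable_id.pow_const _)).comp measurable_id |>.mono le_rfl le_rfl
    _ = _ := by rw [lint_rpow hn]

open scoped ENNReal NNReal

theorem stmt18 {n : ℕ} (hn : 2 ≤ n) (q β : ℝ) (hq1 : 1 ≤ q) (hq2 : q < n / ((n : ℝ) - 1))
    (hβ : β = 1 - n * (1 - 1 / q)) :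
    ∃ C > (0 : ℝ), ∀ u : EuclideanSpace ℝ (Fin n) → ℝ,
      ContDiff ℝ (⊤ : ℕ∞) u → HasCompactSupport u →
      (∫⁻ x, ENNReal.ofReal ((‖x‖ ^ (-β) * |u x|) ^ q)) ≤
        ENNReal.ofReal ((C * ∫ x, ‖fderiv ℝ u x‖) ^ q) := by
  have hncast : (2:ℝ) ≤ (n:ℝ) := by exact_mod_cast hn
  have hn1' : (0:ℝ) < (n:ℝ) - 1 := by linarith
  set p : ℝ := (n:ℝ) / ((n:ℝ) - 1) with hp
  have hpn : Real.HolderConjugate (n:ℝ) p := by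
    rw [Real.holderConjugate_iff]; constructor
    · linarith
    · rw [hp, inv_div]
      field_simp; ring
  set CS : ℝ≥0 :=
    lintegralPowLePowLIntegralFDerivConst (volume : Measure (EuclideanSpace ℝ (Fin n))) p with hCS
  refine ⟨max 1 (CS:ℝ), lt_of_lt_of_le one_pos (le_max_left _ _), ?_⟩
  intro u hu h2u
  set C : ℝ := max 1 (CS:ℝ) with hCdef
  have hC1 : (1:ℝ) ≤ C := le_max_left _ _
  have h1u : ContDiff ℝ 1 u := hu.of_le ((by simp) : (1 : WithTop ℕ∞) ≤ ((⊤ : ℕ∞) : WithTop ℕ∞))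
  have hDu_cont : Continuous (fderiv ℝ u) := h1u.continuous_fderiv one_ne_zero
  have hDu_supp : HasCompactSupport (fderiv ℝ u) := h2u.fderiv (𝕜 := ℝ)
  have hInt : Integrable (fun x : EuclideanSpace ℝ (Fin n) => ‖fderiv ℝ u x‖) :=
    (hDu_cont.norm).integrable_of_hasCompactSupport hDu_supp.norm
  set I : ℝ := ∫ x, ‖fderiv ℝ u x‖ with hI
  set J : ℝ≥0∞ := ∫⁻ x, (‖fderiv ℝ u x‖₊ : ℝ≥0∞) with hJ
  have hI0 : 0 ≤ I := integral_nonneg fun x => norm_nonneg _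
  have hJI : ENNReal.ofReal I = J := by
    rw [hI, ofReal_integral_eq_lintegral_ofReal hInt
      (Filter.Eventually.of_forall fun x => norm_nonneg _)]
    simp_rw [ofReal_norm, enorm_eq_nnnorm, hJ]
  have hJtop : J ≠ ⊤ := by rw [← hJI]; exact ENNReal.ofReal_ne_top
  have hq0 : (0:ℝ) < q := by linarith
  have hqne : q ≠ 0 := hq0.ne'
  have hRHS : ENNReal.ofReal ((C * I) ^ q) = (ENNReal.ofReal C) ^ q * J ^ q := by
    rw [← ENNReal.ofReal_rpow_of_nonneg (by positivity) hq0.le,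
      ENNReal.ofReal_mul (by linarith : (0:ℝ) ≤ C), hJI,
      ENNReal.mul_rpow_of_nonneg _ _ hq0.le]
  rw [hRHS]
  have hSob : ∫⁻ x, (‖u x‖₊ : ℝ≥0∞) ^ p ≤ (CS : ℝ≥0∞) * J ^ p := by
    have hfr : Real.HolderConjugate (Module.finrank ℝ (EuclideanSpace ℝ (Fin n))) p := by
      rw [finrank_euclideanSpace, Fintype.card_fin]; exact hpn
    exact lintegral_pow_le_pow_lintegral_fderiv volume h1u h2u hfr
  have hHar := hardy hn u h1u h2u
  have hofle1 : ENNReal.ofReal (1/((n:ℝ)-1)) ≤ 1 := by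
    rw [← ENNReal.ofReal_one]
    apply ENNReal.ofReal_le_ofReal
    rw [div_le_one hn1']; linarith
  have hHar' : ∫⁻ x, ENNReal.ofReal (|u x| / ‖x‖) ≤ J := by
    refine hHar.trans ?_
    calc ENNReal.ofReal (1/((n:ℝ)-1)) * J ≤ 1 * J := mul_le_mul_left hofle1 _
      _ = J := one_mul J
  have hCge1 : (1:ℝ≥0∞) ≤ ENNReal.ofReal C := ENNReal.one_le_ofReal.2 hC1
  rcases eq_or_lt_of_le hq1 with hq|hq
  · -- q = 1
    have hβ1 : β = 1 := by rw [hβ, ← hq]; norm_num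
    rw [← hq, hβ1]
    simp only [Real.rpow_one, ENNReal.rpow_one]
    have hpt : ∀ x : EuclideanSpace ℝ (Fin n),
        ‖x‖ ^ (-(1:ℝ)) * |u x| = |u x| / ‖x‖ := fun x => by
      rw [Real.rpow_neg_one, inv_mul_eq_div]
    simp_rw [hpt]
    calc ∫⁻ x, ENNReal.ofReal (|u x| / ‖x‖) ≤ J := hHar'
      _ = 1 * J := (one_mul J).symm
      _ ≤ ENNReal.ofReal C * J := mul_le_mul_left hCge1 _
  · -- 1 < q
    have hq1' : (0:ℝ) < q - 1 := by linarith
    have hqn : q * ((n:ℝ)-1) < n := (lt_div_iff₀ hn1').mp hq2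
    have hbq : β*q = q - n*(q-1) := by rw [hβ]; field_simp
    have hbq_pos : 0 < β*q := by rw [hbq]; nlinarith
    have hbq_lt1 : β*q < 1 := by rw [hbq]; nlinarith
    have hβ0 : 0 < β := by nlinarith [hbq_pos, hq0]
    have h1bq : (1-β)*q = n*(q-1) := by rw [hβ]; field_simp; ring
    have h1bq_nonneg : 0 ≤ (1-β)*q := by rw [h1bq]; positivity
    have hconj : Real.HolderConjugate (1/(β*q)) (1/(((n:ℝ)-1)*(q-1))) := by
      rw [Real.holderConjugate_iff]; constructor
      · rw [lt_div_iff₀ hbq_pos, one_mul]; exact hbq_lt1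
      · rw [one_div, inv_inv, one_div, inv_inv, hbq]; ring
    set f : EuclideanSpace ℝ (Fin n) → ℝ≥0∞ :=
      fun x => (ENNReal.ofReal (|u x|/‖x‖))^(β*q) with hf
    set g : EuclideanSpace ℝ (Fin n) → ℝ≥0∞ :=
      fun x => (ENNReal.ofReal |u x|)^((1-β)*q) with hg
    have hL : ∫⁻ x, ENNReal.ofReal ((‖x‖ ^ (-β) * |u x|) ^ q) = ∫⁻ x, (f*g) x := by
      refine lintegral_congr fun x => ?_
      simp only [Pi.mul_apply, hf, hg]
      rcases eq_or_ne x 0 with rfl|hx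
      · rw [norm_zero, Real.zero_rpow (neg_ne_zero.2 hβ0.ne'), zero_mul,
          Real.zero_rpow hqne, div_zero, ENNReal.ofReal_zero,
          ENNReal.zero_rpow_of_pos hbq_pos, zero_mul]
      · have hxn : 0 < ‖x‖ := norm_pos_iff.mpr hx
        have hreal : (‖x‖ ^ (-β) * |u x|) ^ q = (|u x|/‖x‖)^(β*q) * |u x|^((1-β)*q) := by
          rcases eq_or_ne (u x) 0 with h0|h0
          · rw [h0, abs_zero, mul_zero, Real.zero_rpow hqne, zero_div,
              Real.zero_rpow hbq_pos.ne', zero_mul]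
          · have hux : 0 < |u x| := abs_pos.2 h0
            have e1 : (|u x| / ‖x‖)^(β*q) = |u x|^(β*q) * (‖x‖^(β*q))⁻¹ := by
              rw [Real.div_rpow hux.le (norm_nonneg x), div_eq_mul_inv]
            have e2 : |u x|^(β*q) * |u x|^((1-β)*q) = |u x|^q := by
              rw [← Real.rpow_add hux]; ring_nf
            have e3 : (‖x‖^(-β))^q = (‖x‖^(β*q))⁻¹ := by
              rw [← Real.rpow_mul (norm_nonneg x), neg_mul, Real.rpow_neg (norm_nonneg x)]
            calc (‖x‖^(-β) * |u x|)^q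
                = (‖x‖^(-β))^q * |u x|^q :=
                  Real.mul_rpow (Real.rpow_nonneg (norm_nonneg x) _) (abs_nonneg _)
              _ = (‖x‖^(β*q))⁻¹ * (|u x|^(β*q) * |u x|^((1-β)*q)) := by rw [e3, e2]
              _ = (|u x|/‖x‖)^(β*q) * |u x|^((1-β)*q) := by rw [e1]; ring
        rw [hreal,
          ENNReal.ofReal_mul (Real.rpow_nonneg (div_nonneg (abs_nonneg _) (norm_nonneg _)) _),
          ENNReal.ofReal_rpow_of_nonneg (div_nonneg (abs_nonneg _) (norm_nonneg _)) hbq_pos.le,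
          ENNReal.ofReal_rpow_of_nonneg (abs_nonneg _) h1bq_nonneg]
    have humeas : Measurable u := hu.continuous.measurable
    have hfm : AEMeasurable f := by
      refine Measurable.aemeasurable ?_
      exact ((humeas.abs.div continuous_norm.measurable).ennreal_ofReal.pow_const _)
    have hgm : AEMeasurable g := by
      refine Measurable.aemeasurable ?_
      exact (humeas.abs.ennreal_ofReal.pow_const _)
    have key := ENNReal.lintegral_mul_le_Lp_mul_Lq volume hconj hfm hgm
    have hf' : ∀ x : EuclideanSpace ℝ (Fin n),
        f x ^ (1/(β*q)) = ENNReal.ofReal (|u x|/‖x‖) := fun x => by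
      rw [hf, ← ENNReal.rpow_mul, mul_one_div_cancel hbq_pos.ne', ENNReal.rpow_one]
    have hg' : ∀ x : EuclideanSpace ℝ (Fin n),
        g x ^ (1/(((n:ℝ)-1)*(q-1))) = (‖u x‖₊ : ℝ≥0∞) ^ p := fun x => by
      rw [hg, ← ENNReal.rpow_mul]
      congr 1
      · exact (Real.enorm_eq_ofReal_abs _).symm
      · rw [h1bq, hp]; field_simp
    simp_rw [hf', hg', one_div_one_div] at key
    rw [hL]
    refine key.trans ?_
    rcases eq_or_ne J 0 with hJ0|hJ0
    · have hH0 : ∫⁻ x, ENNReal.ofReal (|u x|/‖x‖) = 0 :=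
        le_antisymm (hHar'.trans hJ0.le) zero_le
      rw [hH0, ENNReal.zero_rpow_of_pos hbq_pos, zero_mul]
      exact zero_le
    · have hqq1_nonneg : (0:ℝ) ≤ ((n:ℝ)-1)*(q-1) := by positivity
      calc (∫⁻ x, ENNReal.ofReal (|u x|/‖x‖)) ^ (β*q)
            * (∫⁻ x, (‖u x‖₊ : ℝ≥0∞) ^ p) ^ (((n:ℝ)-1)*(q-1))
          ≤ J ^ (β*q) * ((CS : ℝ≥0∞) * J ^ p) ^ (((n:ℝ)-1)*(q-1)) :=
            mul_le_mul' (ENNReal.rpow_le_rpow hHar' hbq_pos.le)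
              (ENNReal.rpow_le_rpow hSob hqq1_nonneg)
        _ = (CS : ℝ≥0∞) ^ (((n:ℝ)-1)*(q-1)) * (J ^ (β*q) * (J^p) ^ (((n:ℝ)-1)*(q-1))) := by
            rw [ENNReal.mul_rpow_of_nonneg _ _ hqq1_nonneg]; ring
        _ = (CS : ℝ≥0∞) ^ (((n:ℝ)-1)*(q-1)) * J ^ q := by
            congr 1
            rw [← ENNReal.rpow_mul, ← ENNReal.rpow_add _ _ hJ0 hJtop]
            congr 1
            rw [hbq, hp]
            field_simp
            ring
        _ ≤ (ENNReal.ofReal C) ^ q * J ^ q := by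
            refine mul_le_mul_left ?_ _
            have hCSle : (CS:ℝ≥0∞) ≤ ENNReal.ofReal C := by
              rw [← ENNReal.ofReal_coe_nnreal]
              exact ENNReal.ofReal_le_ofReal (le_max_right _ _)
            have e_le : ((n:ℝ)-1)*(q-1) ≤ q := by nlinarith
            calc (CS : ℝ≥0∞) ^ (((n:ℝ)-1)*(q-1))
                ≤ (ENNReal.ofReal C) ^ (((n:ℝ)-1)*(q-1)) :=
                  ENNReal.rpow_le_rpow hCSle hqq1_nonneg
              _ ≤ (ENNReal.ofReal C) ^ q :=
                  ENNReal.rpow_le_rpow_of_exponent_le hCge1 e_le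
end
end
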